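/- arXiv:1606.00815 — 6 statements merged into one kernel-verified Lean document; each statement's English description precedes it below -/
import Mathlib

section
/- Let q be an odd prime power and n ≥ 2. For every n×n negacirculant matrix A over F_q there exists an n×n monomial (generalized permutation) matrix P over F_q, i.e., an invertible matrix with exactly one nonzero entry in each row and each column, such that P * A * P = Aᵀ. -/
/-- An `n × n` matrix over a ring is *negacirculant* if its rows are obtained by
successive negashifts of its first row `a`: with 0-based indices,
`A i j = a (j - i)` if `i ≤ j` and `A i j = - a (n + j - i)` if `j < i`
(here `j - i` is computed in `Fin n`, i.e. modulo `n`). -/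
def IsNegacirculant {F : Type*} [Ring F] {n : ℕ} (A : Matrix (Fin n) (Fin n) F) : Prop :=
  ∃ a : Fin n → F, ∀ i j : Fin n,
    A i j = if (i : ℕ) ≤ (j : ℕ) then a (j - i) else - a (j - i)

/-- For every negacirculant matrix `A` over the finite field `F` of odd order `q`,
there is a monomial (generalized permutation) matrix `P` — an invertible matrix with
exactly one nonzero entry in each row and in each column — with `P * A * P = Aᵀ`. -/
theorem negacirculant_monomial_conjugate_transpose
    {q n : ℕ} (F : Type*) [Field F] [Fintype F]
    (hcard : Fintype.card F = q) (hodd : Odd q) (hn : 2 ≤ n)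
    (A : Matrix (Fin n) (Fin n) F) (hA : IsNegacirculant A) :
    ∃ P : Matrix (Fin n) (Fin n) F,
      IsUnit P ∧
      (∀ i : Fin n, ∃! j : Fin n, P i j ≠ 0) ∧
      (∀ j : Fin n, ∃! i : Fin n, P i j ≠ 0) ∧
      P * A * P = A.transpose := by
  haveI : NeZero n := ⟨by omega⟩
  obtain ⟨a, ha⟩ := hA
  set c : Fin n → F := fun i => if i = 0 then 1 else -1 with hc
  have hc0 : ∀ i, c i ≠ 0 := by
    intro i; simp only [hc]; split <;> simp
  set P : Matrix (Fin n) (Fin n) F :=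
    Matrix.of fun i j => if j = -i then c i else 0 with hP
  have hPe : ∀ i j, P i j = if j = -i then c i else 0 := fun i j => rfl
  have hL : ∀ (M : Matrix (Fin n) (Fin n) F) i k, (P * M) i k = c i * M (-i) k := by
    intro M i k
    rw [Matrix.mul_apply, Finset.sum_eq_single (-i)]
    · simp [hPe]
    · intro b _ hb; simp [hPe, hb]
    · simp
  have hR : ∀ (M : Matrix (Fin n) (Fin n) F) i k, (M * P) i k = M i (-k) * c (-k) := by
    intro M i k
    rw [Matrix.mul_apply, Finset.sum_eq_single (-k)]
    · simp [hPe]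
    · intro b _ hb
      have : ¬ (k = -b) := fun h => hb (by rw [h, neg_neg])
      simp [hPe, this]
    · simp
  have hpos : ∀ i : Fin n, i ≠ 0 → 0 < (i : ℕ) := by
    intro i hi
    refine Nat.pos_of_ne_zero fun h => hi ?_
    ext; simpa using h
  have hcoe : ∀ i : Fin n, i ≠ 0 → ((-i : Fin n) : ℕ) = n - (i : ℕ) := by
    intro i hi
    have h1 : ((-i : Fin n) : ℕ) = (n - (i : ℕ)) % n := rfl
    have h2 : (0 : ℕ) < (i : ℕ) := hpos i hi
    have h3 : (i : ℕ) < n := i.isLt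
    rw [h1, Nat.mod_eq_of_lt (by omega)]
  have hczero : c 0 = 1 := by simp [hc]
  have hcne : ∀ i : Fin n, i ≠ 0 → c i = -1 := by intro i hi; simp [hc, hi]
  have hcc : ∀ i, c i * c (-i) = 1 := by
    intro i
    by_cases hi : i = 0
    · subst hi; simp [hczero]
    · rw [hcne i hi, hcne (-i) (neg_ne_zero.mpr hi)]; ring
  have hPP : P * P = 1 := by
    ext i j
    rw [hL P i j, hPe, neg_neg]
    by_cases h : j = i
    · subst h; rw [if_pos rfl, hcc, Matrix.one_apply_eq]
    · rw [if_neg h, mul_zero, Matrix.one_apply_ne (Ne.symm h)]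
  refine ⟨P, ⟨⟨P, P, hPP, hPP⟩, rfl⟩, ?_, ?_, ?_⟩
  · intro i
    refine ⟨-i, by simp [hPe, hc0], ?_⟩
    intro j hj
    by_contra hne
    exact hj (by simp [hPe, hne])
  · intro j
    refine ⟨-j, by simp [hPe, hc0], ?_⟩
    intro i hi
    by_contra hne
    have : ¬ (j = -i) := fun h => hne (by rw [h, neg_neg])
    exact hi (by simp [hPe, this])
  · ext i j
    rw [hR, hL, Matrix.transpose_apply, ha (-i) (-j), ha j i, neg_sub_neg]
    have hiv : (i : ℕ) < n := i.isLt
    have hjv : (j : ℕ) < n := j.isLt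
    by_cases hi : i = 0 <;> by_cases hj : j = 0
    · subst hi; subst hj; simp [hczero]
    · subst hi
      have h1 : (((-0 : Fin n)) : ℕ) ≤ ((-j : Fin n) : ℕ) := by
        rw [neg_zero]; simp
      have h2 : ¬ ((j : ℕ) ≤ ((0 : Fin n) : ℕ)) := by
        have := hpos j hj
        simp only [Fin.val_zero]; omega
      rw [if_pos h1, if_neg h2, hczero, hcne (-j) (neg_ne_zero.mpr hj)]; ring
    · subst hj
      have hip := hpos i hi
      have h1 : ¬ (((-i : Fin n)) : ℕ) ≤ ((-0 : Fin n) : ℕ) := by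
        rw [neg_zero, hcoe i hi]
        simp only [Fin.val_zero]; omega
      have h2 : ((0 : Fin n) : ℕ) ≤ (i : ℕ) := by simp
      rw [if_neg h1, if_pos h2, hcne i hi, neg_zero, hczero]; ring
    · have hip := hpos i hi
      have hjp := hpos j hj
      rw [hcoe i hi, hcoe j hj, hcne i hi, hcne (-j) (neg_ne_zero.mpr hj)]
      by_cases h : (j : ℕ) ≤ (i : ℕ)
      · rw [if_pos (by omega : n - (i:ℕ) ≤ n - (j:ℕ)), if_pos h]; ring
      · rw [if_neg (by omega : ¬ n - (i:ℕ) ≤ n - (j:ℕ)), if_neg h]; ring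
end

section
/- Let q be a prime power with q ≡ 3 (mod 4), and write q = 2^A·m − 1 with m odd and A ≥ 2 (so 2^A exactly divides q+1). If 2 ≤ n < A, then over F_q the polynomial x^{2^n} + 1 factors as the product of 2^{n−1} irreducible quadratic trinomials: x^{2^n} + 1 = ∏_{γ ∈ Γ} (x² + γ x + 1), where Γ ⊆ F_q is the set of roots in F_q of the Dickson polynomial D_{2^{n−1}}(x, 1), each factor x² + γx + 1 is irreducible over F_q, and |Γ| = 2^{n−1}. -/
/-!
Put `k = 2^(n-1)`. In an algebraic closure, the roots `u` of `x^(2k) + 1` are distinct, closed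
under `u ↦ u⁻¹` and never self-inverse, so pairing `u` with `u⁻¹` writes `x^(2k) + 1` as the
product of the `k` quadratics `x² + (u + u⁻¹)x + 1`; the `k` values `u + u⁻¹` are all the roots of
`D_k(x, 1)`, since `D_k(u + u⁻¹, 1) = u^k + u^(-k) = 0`. As `4k ∣ q + 1`, each such `u` satisfies
`u^q = u⁻¹`, so `u + u⁻¹` is fixed by Frobenius and lies in `F_q`. Finally `x^(2k) + 1` has no root
in `F_q` (a root would satisfy `x² = x^(q+1) = 1`), so its quadratic factors are irreducible.
-/

open Polynomial

namespace Polynomial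

variable {R : Type*} [CommRing R]

theorem natDegree_dickson_le (k : ℕ) (a : R) : ∀ n, (dickson k a n).natDegree ≤ n
  | 0 => by rw [dickson_zero]; exact (natDegree_sub_le _ _).trans (by simp)
  | 1 => by simpa using natDegree_X_le
  | n + 2 => by
      rw [dickson_add_two]
      refine (natDegree_sub_le _ _).trans (max_le ?_ ((natDegree_C_mul_le _ _).trans ?_))
      · exact natDegree_mul_le.trans
          (by linarith [natDegree_X_le (R := R), natDegree_dickson_le k a (n + 1)])
      · exact (natDegree_dickson_le k a n).trans (by omega)

theorem coeff_dickson_self (k : ℕ) (a : R) : ∀ {n}, n ≠ 0 → (dickson k a n).coeff n = 1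
  | 1, _ => by simp
  | n + 2, _ => by
      rw [dickson_add_two, coeff_sub, coeff_X_mul, coeff_dickson_self k a n.succ_ne_zero,
        coeff_C_mul, coeff_eq_zero_of_natDegree_lt ((natDegree_dickson_le k a n).trans_lt
          (by omega)), mul_zero, sub_zero]

theorem monic_dickson (k : ℕ) (a : R) {n : ℕ} (hn : n ≠ 0) : (dickson k a n).Monic :=
  monic_of_natDegree_le_of_coeff_eq_one n (natDegree_dickson_le k a n) (coeff_dickson_self k a hn)

end Polynomial

section Field

variable {K : Type*} [Field K]

theorem X_add_C_mul_X_add_C_inv {u : K} (hu : u ≠ 0) :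
    (X + C u) * (X + C u⁻¹) = X ^ 2 + C (u + u⁻¹) * X + 1 := by
  have h : C u * C u⁻¹ = (1 : K[X]) := by rw [← C_mul, mul_inv_cancel₀ hu, C_1]
  rw [C_add]
  linear_combination h

theorem eq_or_eq_inv_of_add_inv_eq_add_inv {u v : K} (hu : u ≠ 0) (hv : v ≠ 0)
    (h : v + v⁻¹ = u + u⁻¹) : v = u ∨ v = u⁻¹ := by
  have : (v - u) * (v - u⁻¹) = 0 := by
    field_simp at h ⊢
    linear_combination h
  simpa [sub_eq_zero] using this

structure IsInvPaired (U : Finset K) : Prop where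
  zero_notMem : 0 ∉ U
  inv_mem : ∀ u ∈ U, u⁻¹ ∈ U
  inv_ne_self : ∀ u ∈ U, u⁻¹ ≠ u

namespace IsInvPaired

variable [DecidableEq K] {U : Finset K}

theorem filter_add_inv_eq (hU : IsInvPaired U) {u : K} (hu : u ∈ U) :
    {v ∈ U | v + v⁻¹ = u + u⁻¹} = {u, u⁻¹} := by
  ext v
  simp only [Finset.mem_filter, Finset.mem_insert, Finset.mem_singleton]
  constructor
  · rintro ⟨hv, h⟩
    exact eq_or_eq_inv_of_add_inv_eq_add_inv (ne_of_mem_of_not_mem hu hU.zero_notMem)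
      (ne_of_mem_of_not_mem hv hU.zero_notMem) h
  · rintro (rfl | rfl)
    · exact ⟨hu, rfl⟩
    · exact ⟨hU.inv_mem u hu, by rw [inv_inv, add_comm]⟩

theorem prod_X_add_C_eq (hU : IsInvPaired U) :
    ∏ u ∈ U, (X + C u) = ∏ γ ∈ U.image (fun u => u + u⁻¹), (X ^ 2 + C γ * X + 1) := by
  rw [← Finset.prod_fiberwise_of_maps_to (g := fun u => u + u⁻¹)
    fun u hu => Finset.mem_image_of_mem _ hu]
  refine Finset.prod_congr rfl fun γ hγ => ?_
  obtain ⟨u, hu, rfl⟩ := Finset.mem_image.mp hγ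
  rw [hU.filter_add_inv_eq hu, Finset.prod_pair (hU.inv_ne_self u hu).symm,
    X_add_C_mul_X_add_C_inv (ne_of_mem_of_not_mem hu hU.zero_notMem)]

theorem two_mul_card_image_add_inv (hU : IsInvPaired U) :
    2 * (U.image fun u => u + u⁻¹).card = U.card := by
  rw [Finset.card_eq_sum_card_image (fun u => u + u⁻¹) U, mul_comm, ← smul_eq_mul,
    ← Finset.sum_const]
  refine Finset.sum_congr rfl fun γ hγ => ?_
  obtain ⟨u, hu, rfl⟩ := Finset.mem_image.mp hγ
  rw [hU.filter_add_inv_eq hu, Finset.card_pair (hU.inv_ne_self u hu).symm]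

end IsInvPaired

theorem X_pow_sub_C_eq_prod_nthRootsFinset [IsAlgClosed K] {n : ℕ} (hn : (n : K) ≠ 0) {a : K}
    (ha : a ≠ 0) : X ^ n - C a = ∏ u ∈ nthRootsFinset n a, (X - C u) := by
  classical
  have hnodup : (nthRoots n a).Nodup := nodup_roots (separable_X_pow_sub_C a hn ha)
  rw [nthRootsFinset_def, Finset.prod_eq_multiset_prod, Multiset.toFinset_val, hnodup.dedup]
  exact ((IsAlgClosed.splits _).eq_prod_roots_of_monic
    (monic_X_pow_sub_C a (by rintro rfl; simp at hn)))

theorem card_nthRootsFinset_of_isAlgClosed [IsAlgClosed K] {n : ℕ} (hn : (n : K) ≠ 0) {a : K}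
    (ha : a ≠ 0) : (nthRootsFinset n a).card = n := by
  classical
  have h := congrArg natDegree (X_pow_sub_C_eq_prod_nthRootsFinset hn ha)
  rwa [natDegree_X_pow_sub_C, natDegree_finsetProd_X_sub_C_eq_card, eq_comm] at h

theorem inv_mem_nthRootsFinset {n : ℕ} {a u : K} (hu : u ∈ nthRootsFinset n a) :
    u⁻¹ ∈ nthRootsFinset n a⁻¹ := by
  have hn : 0 < n := Nat.pos_of_ne_zero (by rintro rfl; simp at hu)
  rw [mem_nthRootsFinset hn] at hu ⊢
  rw [inv_pow, hu]

theorem neg_mem_nthRootsFinset {n : ℕ} (hn : Even n) {a u : K} (hu : u ∈ nthRootsFinset n a) :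
    -u ∈ nthRootsFinset n a := by
  have hn0 : 0 < n := Nat.pos_of_ne_zero (by rintro rfl; simp at hu)
  rw [mem_nthRootsFinset hn0] at hu ⊢
  rw [hn.neg_pow, hu]

theorem isInvPaired_nthRootsFinset_neg_one (h2 : (2 : K) ≠ 0) (k : ℕ) :
    IsInvPaired (nthRootsFinset (2 * k) (-1 : K)) where
  zero_notMem h := ne_zero_of_mem_nthRootsFinset (by simp) h rfl
  inv_mem u hu := by simpa using inv_mem_nthRootsFinset hu
  inv_ne_self u hu h := by
    have hk : 0 < 2 * k := Nat.pos_of_ne_zero (by rintro h; simp [h] at hu)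
    have hu2 : u ^ 2 = 1 := by
      rw [pow_two]; nth_rewrite 1 [← h]
      exact inv_mul_cancel₀ (ne_zero_of_mem_nthRootsFinset (by simp) hu)
    rw [mem_nthRootsFinset hk, pow_mul, hu2, one_pow] at hu
    exact h2 (by linear_combination hu)

theorem dickson_one_one_eval_add_inv_eq_zero {k : ℕ} {u : K}
    (hu : u ∈ nthRootsFinset (2 * k) (-1 : K)) : (dickson 1 (1 : K) k).eval (u + u⁻¹) = 0 := by
  have hu0 : u ≠ 0 := ne_zero_of_mem_nthRootsFinset (by simp) hu
  have hk : 0 < 2 * k := Nat.pos_of_ne_zero (by rintro h; simp [h] at hu)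
  rw [mem_nthRootsFinset hk, pow_mul'] at hu
  have huk : u ^ k ≠ 0 := pow_ne_zero k hu0
  rw [dickson_one_one_eval_add_inv u u⁻¹ (mul_inv_cancel₀ hu0), inv_pow, ← mul_right_inj' huk,
    mul_add, mul_inv_cancel₀ huk, mul_zero, ← sq, hu, neg_add_cancel]

variable [IsAlgClosed K] [DecidableEq K]

theorem X_pow_add_one_eq_prod_image_add_inv {k : ℕ} (hk : ((2 * k : ℕ) : K) ≠ 0) :
    (X ^ (2 * k) + 1 : K[X]) =
      ∏ γ ∈ (nthRootsFinset (2 * k) (-1 : K)).image (fun u => u + u⁻¹),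
        (X ^ 2 + C γ * X + 1) := by
  have h2 : (2 : K) ≠ 0 := fun h => hk (by push_cast; rw [h, zero_mul])
  set U := nthRootsFinset (2 * k) (-1 : K)
  have hneg : ∀ u ∈ U, -u ∈ U := fun u hu => neg_mem_nthRootsFinset (even_two_mul k) hu
  calc (X ^ (2 * k) + 1 : K[X]) = ∏ u ∈ U, (X - C u) := by
        rw [← X_pow_sub_C_eq_prod_nthRootsFinset hk (by simp), C_neg, C_1, sub_neg_eq_add]
    _ = ∏ u ∈ U, (X + C u) :=
        Finset.prod_nbij' Neg.neg Neg.neg hneg hneg (fun u _ => neg_neg u) (fun u _ => neg_neg u)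
          fun u _ => by rw [C_neg, sub_eq_add_neg]
    _ = _ := (isInvPaired_nthRootsFinset_neg_one h2 k).prod_X_add_C_eq

theorem card_image_add_inv_nthRootsFinset_neg_one {k : ℕ} (hk : ((2 * k : ℕ) : K) ≠ 0) :
    ((nthRootsFinset (2 * k) (-1 : K)).image fun u => u + u⁻¹).card = k := by
  have h2 : (2 : K) ≠ 0 := fun h => hk (by push_cast; rw [h, zero_mul])
  have h := (isInvPaired_nthRootsFinset_neg_one h2 k).two_mul_card_image_add_inv
  rw [card_nthRootsFinset_of_isAlgClosed hk (by simp)] at h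
  omega

theorem image_add_inv_nthRootsFinset_neg_one {k : ℕ} (hk : ((2 * k : ℕ) : K) ≠ 0) :
    (nthRootsFinset (2 * k) (-1 : K)).image (fun u => u + u⁻¹) =
      (dickson 1 (1 : K) k).roots.toFinset := by
  have h2 : (2 : K) ≠ 0 := fun h => hk (by push_cast; rw [h, zero_mul])
  have hk0 : k ≠ 0 := by rintro rfl; simp at hk
  refine Finset.eq_of_subset_of_card_le (fun γ hγ => ?_) ?_
  · obtain ⟨u, hu, rfl⟩ := Finset.mem_image.mp hγ
    rw [Multiset.mem_toFinset, mem_roots (monic_dickson 1 1 hk0).ne_zero]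
    exact dickson_one_one_eval_add_inv_eq_zero hu
  · calc (dickson 1 (1 : K) k).roots.toFinset.card
        ≤ Multiset.card (dickson 1 (1 : K) k).roots := Multiset.toFinset_card_le _
      _ ≤ k := (card_roots' _).trans (natDegree_dickson_le 1 1 k)
      _ = _ := (card_image_add_inv_nthRootsFinset_neg_one hk).symm

end Field

namespace FiniteField

variable {F : Type*} [Field F] [Fintype F]

theorem natCast_ne_zero_of_dvd_card_add_one (L : Type*) [Field L] [Algebra F L] {d : ℕ}
    (h : d ∣ Fintype.card F + 1) : (d : L) ≠ 0 := by
  rw [← map_natCast (algebraMap F L), _root_.map_ne_zero]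
  intro hd
  obtain ⟨c, hc⟩ := h
  have := congrArg (Nat.cast : ℕ → F) hc
  push_cast [cast_card_eq_zero, hd] at this
  simp at this

theorem exists_algebraMap_eq_of_pow_card_eq {L : Type*} [Field L] [Algebra F L] {x : L}
    (hx : x ^ Fintype.card F = x) : ∃ a : F, algebraMap F L a = x := by
  have h1 : 1 < Fintype.card F := Fintype.one_lt_card
  have hroots := roots_map_of_injective_of_card_eq_natDegree (algebraMap F L).injective
    (p := X ^ Fintype.card F - X) (by
      rw [roots_X_pow_card_sub_X, X_pow_card_sub_X_natDegree_eq F h1]; rfl)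
  have hx : x ∈ ((X ^ Fintype.card F - X : F[X]).map (algebraMap F L)).roots := by
    rw [mem_roots (Polynomial.map_ne_zero (X_pow_card_sub_X_ne_zero F h1))]
    simp [hx]
  rw [← hroots, roots_X_pow_card_sub_X] at hx
  simpa using hx

variable {k : ℕ}

theorem natCast_two_mul_ne_zero (L : Type*) [Field L] [Algebra F L]
    (hdvd : 4 * k ∣ Fintype.card F + 1) : ((2 * k : ℕ) : L) ≠ 0 :=
  natCast_ne_zero_of_dvd_card_add_one L ((Dvd.intro 2 (by ring)).trans hdvd)

theorem add_inv_pow_card_eq {L : Type*} [Field L] [Algebra F L]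
    (hdvd : 4 * k ∣ Fintype.card F + 1) {u : L} (hu : u ∈ nthRootsFinset (2 * k) (-1 : L)) :
    (u + u⁻¹) ^ Fintype.card F = u + u⁻¹ := by
  have hk : 0 < 2 * k := Nat.pos_of_ne_zero (by rintro h; simp [h] at hu)
  rw [mem_nthRootsFinset hk] at hu
  have hq : u ^ Fintype.card F = u⁻¹ := by
    obtain ⟨c, hc⟩ := hdvd
    refine eq_inv_of_mul_eq_one_left ?_
    rw [← pow_succ, hc, show 4 * k = 2 * k * 2 by ring, pow_mul, pow_mul, hu]
    norm_num
  have hfrob := map_add (frobeniusAlgHom F L) u u⁻¹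
  simp only [coe_frobeniusAlgHom] at hfrob
  rw [hfrob, inv_pow, hq, inv_inv, add_comm]

theorem image_algebraMap_dickson_roots [DecidableEq F] {L : Type*} [Field L] [Algebra F L]
    [IsAlgClosed L] [DecidableEq L] (hdvd : 4 * k ∣ Fintype.card F + 1) :
    (dickson 1 (1 : F) k).roots.toFinset.image (algebraMap F L) =
      (dickson 1 (1 : L) k).roots.toFinset := by
  have hk := natCast_two_mul_ne_zero L hdvd
  have hk0 : k ≠ 0 := by rintro rfl; simp at hk
  have hF0 := (monic_dickson 1 (1 : F) hk0).ne_zero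
  have hL0 := (monic_dickson 1 (1 : L) hk0).ne_zero
  have hD : ∀ a : F, (dickson 1 (1 : L) k).eval (algebraMap F L a) =
      algebraMap F L ((dickson 1 (1 : F) k).eval a) := fun a => by
    rw [← map_one (algebraMap F L), ← map_dickson, eval_map, eval₂_at_apply]
  ext γ
  simp only [Finset.mem_image, Multiset.mem_toFinset, mem_roots hF0, mem_roots hL0, IsRoot.def]
  constructor
  · rintro ⟨a, ha, rfl⟩
    rw [hD, ha, map_zero]
  · intro hγ
    have hγ' : γ ∈ (nthRootsFinset (2 * k) (-1 : L)).image fun u => u + u⁻¹ := by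
      rwa [image_add_inv_nthRootsFinset_neg_one hk, Multiset.mem_toFinset, mem_roots hL0]
    obtain ⟨u, hu, rfl⟩ := Finset.mem_image.mp hγ'
    obtain ⟨a, ha⟩ := exists_algebraMap_eq_of_pow_card_eq (add_inv_pow_card_eq hdvd hu)
    refine ⟨a, (algebraMap F L).injective ?_, ha⟩
    rw [← hD, ha, hγ, map_zero]

theorem X_pow_add_one_eq_prod_dickson_roots [DecidableEq F]
    (hdvd : 4 * k ∣ Fintype.card F + 1) :
    (X ^ (2 * k) + 1 : F[X]) =
      ∏ γ ∈ (dickson 1 (1 : F) k).roots.toFinset, (X ^ 2 + C γ * X + 1) := by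
  classical
  let e := algebraMap F (AlgebraicClosure F)
  have hk := natCast_two_mul_ne_zero (AlgebraicClosure F) hdvd
  apply map_injective e e.injective
  rw [Polynomial.map_add, Polynomial.map_pow, map_X, Polynomial.map_one,
    X_pow_add_one_eq_prod_image_add_inv hk, image_add_inv_nthRootsFinset_neg_one hk,
    ← image_algebraMap_dickson_roots hdvd, Finset.prod_image fun _ _ _ _ h => e.injective h,
    Polynomial.map_prod]
  simp

theorem card_dickson_roots_toFinset [DecidableEq F] (hdvd : 4 * k ∣ Fintype.card F + 1) :
    (dickson 1 (1 : F) k).roots.toFinset.card = k := by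
  classical
  let e := algebraMap F (AlgebraicClosure F)
  have hk := natCast_two_mul_ne_zero (AlgebraicClosure F) hdvd
  rw [← Finset.card_image_of_injective _ e.injective, image_algebraMap_dickson_roots hdvd,
    ← image_add_inv_nthRootsFinset_neg_one hk, card_image_add_inv_nthRootsFinset_neg_one hk]

theorem pow_two_mul_add_one_ne_zero (hdvd : 4 * k ∣ Fintype.card F + 1) (x : F) :
    x ^ (2 * k) + 1 ≠ 0 := by
  intro hx
  have h2 : (2 : F) ≠ 0 := fun h => natCast_two_mul_ne_zero F hdvd (by push_cast; rw [h, zero_mul])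
  have hxq : x ^ (Fintype.card F + 1) = 1 := by
    obtain ⟨c, hc⟩ := hdvd
    rw [hc, show 4 * k = 2 * k * 2 by ring, pow_mul, pow_mul, eq_neg_of_add_eq_zero_left hx]
    norm_num
  have hx2 : x ^ 2 = 1 := by rwa [pow_succ, pow_card, ← sq] at hxq
  rw [pow_mul, hx2, one_pow] at hx
  exact h2 (by linear_combination hx)

theorem irreducible_X_sq_add_C_mul_X_add_one [DecidableEq F]
    (hdvd : 4 * k ∣ Fintype.card F + 1) {γ : F} (hγ : γ ∈ (dickson 1 (1 : F) k).roots.toFinset) :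
    Irreducible (X ^ 2 + C γ * X + 1 : F[X]) := by
  have hdeg : (X ^ 2 + C γ * X + 1 : F[X]).natDegree = 2 := by
    simpa using natDegree_quadratic (a := (1 : F)) (b := γ) (c := 1) one_ne_zero
  refine irreducible_of_degree_le_three_of_not_isRoot (by simp [hdeg]) fun x hx => ?_
  have hdvd' := (X_pow_add_one_eq_prod_dickson_roots hdvd).symm ▸ Finset.dvd_prod_of_mem _ hγ
  exact pow_two_mul_add_one_ne_zero hdvd x (by simpa using hx.dvd hdvd')

end FiniteField

theorem pow_two_pow_add_one_factorization_case_a_general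
    {q A m : ℕ} (F : Type*) [Field F] [Fintype F] [DecidableEq F]
    (hcard : Fintype.card F = q)
    (hm : Odd m) (hq : q = 2 ^ A * m - 1)
    (n : ℕ) (hn : 2 ≤ n) (hnA : n < A) :
    ∀ Γ : Finset F, Γ = (Polynomial.dickson 1 (1 : F) (2 ^ (n - 1))).roots.toFinset →
      ((X ^ (2 ^ n) + 1 : F[X]) = ∏ γ ∈ Γ, (X ^ 2 + C γ * X + 1)) ∧
      (∀ γ ∈ Γ, Irreducible (X ^ 2 + C γ * X + 1 : F[X])) ∧
      Γ.card = 2 ^ (n - 1) := by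
  rintro Γ rfl
  have hdvd : 4 * 2 ^ (n - 1) ∣ Fintype.card F + 1 := by
    rw [hcard, hq, Nat.sub_add_cancel (Nat.mul_pos (Nat.two_pow_pos A) hm.pos)]
    have h4 : 4 * 2 ^ (n - 1) = 2 ^ (n + 1) := by
      rw [show n + 1 = 2 + (n - 1) by omega, pow_add]; norm_num
    exact Dvd.dvd.mul_right (h4 ▸ pow_dvd_pow 2 (by omega)) m
  have hN : 2 ^ n = 2 * 2 ^ (n - 1) := by rw [← pow_succ']; congr 1; omega
  exact ⟨hN ▸ FiniteField.X_pow_add_one_eq_prod_dickson_roots hdvd,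
    fun γ => FiniteField.irreducible_X_sq_add_C_mul_X_add_one hdvd,
    FiniteField.card_dickson_roots_toFinset hdvd⟩

/-- Factorization of `x^(2^n) + 1` over `F_q`, `q ≡ 3 (mod 4)`, `q = 2^A·m − 1` with `m`
odd and `A ≥ 2`, in the range `2 ≤ n < A`: it is the product of the `2^(n-1)` irreducible
trinomials `x² + γx + 1` where `γ` runs over the set `Γ` of roots in `F_q` of the Dickson
polynomial (of the first kind) `D_{2^(n-1)}(x, 1)`. -/
theorem pow_two_pow_add_one_factorization_case_a
    {q A m : ℕ} (F : Type*) [Field F] [Fintype F] [DecidableEq F]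
    (hcard : Fintype.card F = q) (hq3 : q % 4 = 3)
    (hm : Odd m) (hA : 2 ≤ A) (hq : q = 2 ^ A * m - 1)
    (n : ℕ) (hn : 2 ≤ n) (hnA : n < A) :
    ∀ Γ : Finset F, Γ = (Polynomial.dickson 1 (1 : F) (2 ^ (n - 1))).roots.toFinset →
      ((X ^ (2 ^ n) + 1 : F[X]) = ∏ γ ∈ Γ, (X ^ 2 + C γ * X + 1)) ∧
      (∀ γ ∈ Γ, Irreducible (X ^ 2 + C γ * X + 1 : F[X])) ∧
      Γ.card = 2 ^ (n - 1) :=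
  pow_two_pow_add_one_factorization_case_a_general F hcard hm hq n hn hnA
end

section
/- Let q be a prime power with q ≡ 1 (mod 4), and write q = 2^{A+1}·m + 1 with m odd and A ≥ 1 (so 2^{A+1} exactly divides q−1). If n ≥ A + 1, then over F_q the polynomial x^{2^n} + 1 factors as the product of 2^A irreducible binomials of degree 2^{n−A}: x^{2^n} + 1 = ∏_{u ∈ U_{A+1}} (x^{2^{n−A}} + u), where U_{A+1} is the set of primitive 2^{A+1}-th roots of unity in F_q, |U_{A+1}| = 2^A, and each factor x^{2^{n−A}} + u is irreducible over F_q. -/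
/-!
The primitive `2^(A+1)`-th roots of unity are the roots of the cyclotomic polynomial
`X^(2^A) + 1`, which splits over `F_q` because `2^(A+1) ∣ q - 1`; substituting
`X ↦ -X^(2^(n-A))` gives the factorization. By Euler's criterion each such root `u` is a
nonsquare, since `2^(A+1) ∤ (q - 1)/2`, hence so is `-u` as `-1` is a square; and over any
field in which `-1` is a square, `X^(2^k) - a` is irreducible as soon as `a` is not a square.
-/

open Polynomial IntermediateField

theorem X_pow_two_pow_sub_C_irreducible {K : Type*} [Field K] (hK : IsSquare (-1 : K))
    {a : K} (ha : ¬IsSquare a) (k : ℕ) : Irreducible (X ^ 2 ^ k - C a) := by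
  induction k generalizing K a with
  | zero => simpa using irreducible_X_sub_C a
  | succ k ih =>
    have h2 : Irreducible (X ^ 2 - C a : K[X]) :=
      X_pow_sub_C_irreducible_of_prime Nat.prime_two fun b hb ↦ ha ⟨b, by rw [← hb, sq]⟩
    rw [pow_succ]
    refine X_pow_mul_sub_C_irreducible h2 fun E _ _ x hx ↦ ih ?_ ?_
    · obtain ⟨i, hi⟩ := hK
      exact ⟨algebraMap K K⟮x⟯ i, by rw [← map_mul, ← hi, map_neg, map_one]⟩
    · have hint : IsIntegral K x := by
        by_contra h
        rw [minpoly.eq_zero h] at hx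
        exact h2.ne_zero hx.symm
      -- the norm of a square root of `x` would be a square root of `-a`
      rintro ⟨b, hb⟩
      obtain ⟨i, hi⟩ := hK
      have hnorm : Algebra.norm K (AdjoinSimple.gen K x) = -a := by
        rw [← adjoin.powerBasis_gen hint, Algebra.PowerBasis.norm_gen_eq_coeff_zero_minpoly]
        simp [minpoly_gen, hx]
      refine ha ⟨i * Algebra.norm K b, ?_⟩
      rw [hb, map_mul] at hnorm
      linear_combination hnorm + (Algebra.norm K b) ^ 2 * hi

theorem cyclotomic_two_pow_succ (R : Type*) [CommRing R] (k : ℕ) :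
    cyclotomic (2 ^ (k + 1)) R = X ^ 2 ^ k + 1 := by
  simp [cyclotomic_prime_pow_eq_geom_sum Nat.prime_two, Finset.sum_range_succ, add_comm]

theorem X_pow_mul_add_one_eq_prod_of_eq_prod {R : Type*} [CommRing R] {N : ℕ} (hN : Even N)
    {S : Finset R} (hS : S.card = N) (h : (X ^ N + 1 : R[X]) = ∏ μ ∈ S, (X - C μ)) (M : ℕ) :
    (X ^ (M * N) + 1 : R[X]) = ∏ μ ∈ S, (X ^ M + C μ) := by
  have h' := congrArg (fun p ↦ p.comp (-X ^ M)) h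
  simp only [add_comp, pow_comp, X_comp, one_comp, prod_comp, sub_comp, C_comp, hN.neg_pow,
    ← neg_add'] at h'
  rw [pow_mul, h', Finset.prod_neg, hS, hN.neg_one_pow, one_mul]

theorem FiniteField.exists_isPrimitiveRoot_of_dvd {F : Type*} [Field F] [Fintype F] {k : ℕ}
    (hk : k ∣ Fintype.card F - 1) : ∃ ζ : F, IsPrimitiveRoot ζ k := by
  classical
  obtain ⟨g, hg⟩ := IsCyclic.exists_ofOrder_eq_natCard (α := Fˣ)
  rw [Nat.card_eq_fintype_card, Fintype.card_units] at hg
  obtain ⟨d, hd⟩ := hk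
  have hF := Fintype.one_lt_card (α := F)
  exact ⟨(g : F) ^ d, (IsPrimitiveRoot.iff_orderOf.mpr (by rw [orderOf_units, hg])).pow
    (by omega) (hd.trans (mul_comm _ _))⟩

theorem IsPrimitiveRoot.not_isSquare_of_card_eq {F : Type*} [Field F] [Fintype F] {A m : ℕ}
    (hm : Odd m) (hcard : Fintype.card F = 2 ^ (A + 1) * m + 1) {u : F}
    (hu : IsPrimitiveRoot u (2 ^ (A + 1))) : ¬IsSquare u := by
  replace hcard : Fintype.card F = 2 * (2 ^ A * m) + 1 := by rw [hcard, pow_succ]; ring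
  have hchar : ringChar F ≠ 2 := fun h ↦ by
    have := FiniteField.even_card_of_char_two h
    omega
  intro hsq
  have hdvd : 2 ^ A * 2 ∣ 2 ^ A * m := by
    rw [← pow_succ, hu.eq_orderOf, (by omega : 2 ^ A * m = Fintype.card F / 2)]
    exact orderOf_dvd_of_pow_eq_one
      ((FiniteField.isSquare_iff hchar (hu.ne_zero (by positivity))).mp hsq)
  exact Nat.not_even_iff_odd.mpr hm
    (even_iff_two_dvd.mpr (Nat.dvd_of_mul_dvd_mul_left (by positivity) hdvd))

open scoped Classical in
/-- Factorization of `x^(2^n) + 1` over `F_q`, `q ≡ 1 (mod 4)`, `q = 2^(A+1)·m + 1` with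
`m` odd and `A ≥ 1`, in the range `n ≥ A + 1`: it is the product of the `2^A` irreducible
binomials `x^(2^(n-A)) + u` where `u` runs over the set of primitive `2^(A+1)`-th roots
of unity in `F_q` (elements of multiplicative order exactly `2^(A+1)`). -/
theorem pow_two_pow_add_one_factorization_case_b'
    {q A m : ℕ} (F : Type*) [Field F] [Fintype F]
    (hcard : Fintype.card F = q) (hq1 : q % 4 = 1)
    (hm : Odd m) (hA : 1 ≤ A) (hq : q = 2 ^ (A + 1) * m + 1)
    (n : ℕ) (hn : A + 1 ≤ n) :
    ∀ U : Finset F, U = {u : F | orderOf u = 2 ^ (A + 1)}.toFinset →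
      ((X ^ (2 ^ n) + 1 : F[X]) = ∏ u ∈ U, (X ^ (2 ^ (n - A)) + C u)) ∧
      (∀ u ∈ U, Irreducible (X ^ (2 ^ (n - A)) + C u : F[X])) ∧
      U.card = 2 ^ A := by
  rintro U rfl
  have hU : {u : F | orderOf u = 2 ^ (A + 1)}.toFinset = primitiveRoots (2 ^ (A + 1)) F := by
    ext u
    simp [mem_primitiveRoots (by positivity : 0 < 2 ^ (A + 1)), IsPrimitiveRoot.iff_orderOf]
  obtain ⟨ζ, hζ⟩ : ∃ ζ : F, IsPrimitiveRoot ζ (2 ^ (A + 1)) :=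
    FiniteField.exists_isPrimitiveRoot_of_dvd ⟨m, by omega⟩
  have hcardU : (primitiveRoots (2 ^ (A + 1)) F).card = 2 ^ A := by
    simp [hζ.card_primitiveRoots, Nat.totient_prime_pow_succ Nat.prime_two]
  have hsq : IsSquare (-1 : F) := FiniteField.isSquare_neg_one_iff.mpr (by omega)
  rw [hU]
  refine ⟨?_, fun u hu ↦ ?_, hcardU⟩
  · have h := X_pow_mul_add_one_eq_prod_of_eq_prod (Nat.even_pow.mpr ⟨even_two, by omega⟩)
      hcardU ((cyclotomic_two_pow_succ F A).symm.trans
        (cyclotomic_eq_prod_X_sub_primitiveRoots hζ)) (2 ^ (n - A))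
    rwa [← pow_add, Nat.sub_add_cancel (by omega)] at h
  · have hnsq : ¬IsSquare (-u) := fun h ↦
      (isPrimitiveRoot_of_mem_primitiveRoots hu).not_isSquare_of_card_eq hm (hcard.trans hq)
        (by simpa using hsq.mul h)
    simpa using X_pow_two_pow_sub_C_irreducible hsq hnsq (n - A)
end

section
/- Let q be an odd prime power and n a power of 2 such that x^n + 1 = h(x)·h*(x) over F_q, where h is monic irreducible of degree n/2 and h* ≠ h is its monic reciprocal polynomial. Then the number of n×n negacirculant matrices A over F_q with A Aᵀ = −I equals q^{n/2} − 1; in particular, self-dual double negacirculant codes of length 2n over F_q exist. -/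
/-!
Multiplication by `u` on `R = F[x]/(xⁿ + 1)`, written in the basis `1, x, …, xⁿ⁻¹`, has a
negacirculant transpose, and every negacirculant matrix arises in this way. Transposition
corresponds to the involution `u ↦ ū` of `R` with `x̄ = x⁻¹ = -xⁿ⁻¹`, so the matrices to be
counted correspond to the `u ∈ R` with `u ū = -1`.

By the Chinese remainder theorem `R ≃ F[x]/(h) × F[x]/(h*)`. Since `h(x⁻¹)` vanishes at the roots
of `h*`, the involution maps the first factor into the second by a ring map `τ`. Writing
`u = (v, w)`, the equation `u ū = -1` forces `v ≠ 0` and `w = -τ(v⁻¹)`, and conversely this choice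
solves it because `u ↦ ū` is an involution. Hence the solutions correspond to the units of the
field `F[x]/(h)`, of which there are `q^(n/2) - 1`.
-/

open Polynomial

/-- The monic reciprocal polynomial of `h` (for `h` with `h 0 ≠ 0`). -/
noncomputable def recip {F : Type*} [Field F] (h : F[X]) : F[X] :=
  C (h.coeff 0)⁻¹ * h.reverse

open scoped Matrix

section PowEqNegOne

variable {A : Type*} [CommRing A] {n : ℕ} {r : A}

lemma mul_neg_pow_pred_eq_one (hn : n ≠ 0) (hr : r ^ n + 1 = 0) : r * -r ^ (n - 1) = 1 := by
  rw [mul_neg, ← pow_succ', Nat.sub_add_cancel (Nat.one_le_iff_ne_zero.2 hn)]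
  linear_combination -hr

lemma pow_add_one_eq_zero_of_mul_eq_one {s : A} (hrs : r * s = 1) (hr : r ^ n + 1 = 0) :
    s ^ n + 1 = 0 := by
  have hrsn : r ^ n * s ^ n = 1 := by rw [← mul_pow, hrs, one_pow]
  linear_combination s ^ n * hr - hrsn

end PowEqNegOne

section Recip

variable {F : Type*} [Field F] {h : F[X]}

lemma C_coeff_zero_mul_recip (h0 : h.coeff 0 ≠ 0) : C (h.coeff 0) * recip h = h.reverse := by
  rw [recip, ← mul_assoc, ← C_mul, mul_inv_cancel₀ h0, C_1, one_mul]

lemma monic_recip (h0 : h.coeff 0 ≠ 0) : (recip h).Monic := by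
  rw [Monic, recip, leadingCoeff_C_mul_of_isUnit (isUnit_iff_ne_zero.2 (inv_ne_zero h0)),
    reverse_leadingCoeff, trailingCoeff, natTrailingDegree_eq_zero.2 (Or.inr h0),
    inv_mul_cancel₀ h0]

lemma natDegree_recip (h0 : h.coeff 0 ≠ 0) : (recip h).natDegree = h.natDegree := by
  rw [recip, natDegree_C_mul (inv_ne_zero h0), reverse_natDegree,
    natTrailingDegree_eq_zero.2 (Or.inr h0), Nat.sub_zero]

lemma isCoprime_recip (hmonic : h.Monic) (hirr : Irreducible h) (h0 : h.coeff 0 ≠ 0)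
    (hne : recip h ≠ h) : IsCoprime h (recip h) :=
  hirr.coprime_iff_not_dvd.2 fun hdvd =>
    hne (eq_of_monic_of_dvd_of_natDegree_le hmonic (monic_recip h0) hdvd (natDegree_recip h0).le)

lemma aeval_eq_zero_of_aeval_recip_eq_zero {A : Type*} [CommRing A] [Algebra F A] {r s : A}
    (h0 : h.coeff 0 ≠ 0) (hrs : r * s = 1) (hr : aeval r (recip h) = 0) : aeval s h = 0 := by
  let : Invertible s := ⟨r, hrs, by rw [mul_comm, hrs]⟩
  rw [aeval_def, ← eval₂_reverse_eq_zero_iff, show ⅟s = r from rfl, ← aeval_def,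
    ← C_coeff_zero_mul_recip h0, map_mul, hr, mul_zero]

end Recip

namespace AdjoinRoot

lemma root_pow_add_one_of_dvd {R : Type*} [CommRing R] {n : ℕ} {g : R[X]}
    (hg : g ∣ X ^ n + 1) : root g ^ n + 1 = 0 := by
  rw [← mk_X, ← map_pow, ← map_one (mk g), ← map_add, mk_eq_zero]
  exact hg

noncomputable def mulAlgEquivProd {R : Type*} [CommRing R] {f g : R[X]} (hfg : IsCoprime f g) :
    AdjoinRoot (f * g) ≃ₐ[R] AdjoinRoot f × AdjoinRoot g :=
  AlgEquiv.ofRingEquiv (fun _ => rfl)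
    (f := (Ideal.quotEquivOfEq (Ideal.span_singleton_mul_span_singleton f g).symm).trans
      (Ideal.quotientMulEquivQuotientProd _ _ ((Ideal.isCoprime_span_singleton_iff f g).2 hfg)))

lemma mulAlgEquivProd_root {R : Type*} [CommRing R] {f g : R[X]} (hfg : IsCoprime f g) :
    mulAlgEquivProd hfg (root (f * g)) = (root f, root g) :=
  rfl

lemma natCard_eq_pow_natDegree {F : Type*} [Field F] {h : F[X]} (hmonic : h.Monic) :
    Nat.card (AdjoinRoot h) = Nat.card F ^ h.natDegree := by
  have := hmonic.finite_adjoinRoot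
  rw [Module.natCard_eq_pow_finrank (K := F), (powerBasis' hmonic).finrank, powerBasis'_dim]

end AdjoinRoot

section SwappingInvolution

variable {R K L : Type*} [CommRing R] [Field K] [CommRing L] {σ : R →+* R} {e : R ≃+* K × L}
  {τ : K →+* L} {u : R}

lemma fst_ne_zero_of_mul_eq_neg_one (hu : u * σ u = -1) : (e u).1 ≠ 0 := fun h0 => by
  simpa [h0] using congr((e $hu).1)

lemma snd_eq_of_mul_eq_neg_one (hτ : ∀ u, (e (σ u)).2 = τ (e u).1) (hu : u * σ u = -1) :
    (e u).2 = -τ (e u).1⁻¹ := by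
  have h2 : (e u).2 * τ (e u).1 = -1 := by simpa [hτ] using congr((e $hu).2)
  have hinv : τ (e u).1 * τ (e u).1⁻¹ = 1 := by
    rw [← map_mul, mul_inv_cancel₀ (fst_ne_zero_of_mul_eq_neg_one hu), map_one]
  linear_combination τ (e u).1⁻¹ * h2 - (e u).2 * hinv

lemma mul_eq_neg_one_of_apply_eq [Nontrivial L] (hσ : Function.Involutive σ)
    (hτ : ∀ u, (e (σ u)).2 = τ (e u).1) {v : K} (hv : v ≠ 0) (hu : e u = (v, -τ v⁻¹)) :
    u * σ u = -1 := by
  have hσu : (e (σ u)).1 = -v⁻¹ := τ.injective <| by rw [← hτ, hσ, hu, map_neg]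
  apply e.injective
  rw [map_mul, map_neg, map_one, Prod.ext_iff]
  constructor
  · simp [hu, hσu, hv]
  · simp [hu, hτ, ← map_mul, hv]

variable (σ e τ) in
noncomputable def mulEqNegOneEquivUnits [Nontrivial L] (hσ : Function.Involutive σ)
    (hτ : ∀ u, (e (σ u)).2 = τ (e u).1) : {u : R // u * σ u = -1} ≃ Kˣ where
  toFun u := Units.mk0 (e u).1 (fst_ne_zero_of_mul_eq_neg_one u.2)
  invFun v :=
    ⟨e.symm (v, -τ v⁻¹), mul_eq_neg_one_of_apply_eq hσ hτ v.ne_zero (e.apply_symm_apply _)⟩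
  left_inv u := Subtype.ext <| e.injective <| by
    simp [Prod.ext_iff, snd_eq_of_mul_eq_neg_one hτ u.2]
  right_inv v := by
    ext
    simp

end SwappingInvolution

lemma Matrix.transpose_aeval {R ι : Type*} [CommSemiring R] [Fintype ι] [DecidableEq ι]
    (M : Matrix ι ι R) (p : R[X]) : (aeval M p)ᵀ = aeval Mᵀ p := by
  induction p using Polynomial.induction_on' with
  | add p q hp hq => rw [map_add, Matrix.transpose_add, hp, hq, map_add]
  | monomial k c =>
    simp only [aeval_monomial, ← Algebra.smul_def, Matrix.transpose_smul, Matrix.transpose_pow]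

lemma Polynomial.monic_X_pow_add_one {R : Type*} [CommRing R] {n : ℕ} [NeZero n] :
    (X ^ n + 1 : R[X]).Monic := by
  simpa using monic_X_pow_add_C (1 : R) (NeZero.ne n)

abbrev NegacyclicRing (F : Type*) [CommRing F] (n : ℕ) : Type _ := AdjoinRoot (X ^ n + 1 : F[X])

namespace NegacyclicRing

open AdjoinRoot

section CommRing

variable {F : Type*} [CommRing F] {n : ℕ}

lemma root_pow_add_one : root (X ^ n + 1 : F[X]) ^ n + 1 = 0 :=
  root_pow_add_one_of_dvd dvd_rfl

variable [NeZero n]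

variable (F n) in
/-- The involution `x ↦ x⁻¹`. -/
noncomputable def conj : NegacyclicRing F n →ₐ[F] NegacyclicRing F n :=
  liftAlgHom _ (Algebra.ofId F _) (-root (X ^ n + 1 : F[X]) ^ (n - 1)) <| by
    simpa using pow_add_one_eq_zero_of_mul_eq_one
      (mul_neg_pow_pred_eq_one (NeZero.ne n) root_pow_add_one) root_pow_add_one

lemma conj_root : conj F n (root _) = -root (X ^ n + 1 : F[X]) ^ (n - 1) :=
  liftAlgHom_root ..

lemma root_mul_conj_root : root (X ^ n + 1 : F[X]) * conj F n (root _) = 1 := by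
  rw [conj_root, mul_neg_pow_pred_eq_one (NeZero.ne n) root_pow_add_one]

lemma conj_conj (u : NegacyclicRing F n) : conj F n (conj F n u) = u := by
  suffices (conj F n).comp (conj F n) = AlgHom.id F _ from congr($this u)
  refine AdjoinRoot.algHom_ext ?_
  have h₁ := root_mul_conj_root (F := F) (n := n)
  have h₂ := congr(conj F n $h₁)
  rw [map_mul, map_one] at h₂
  simp only [AlgHom.comp_apply, AlgHom.id_apply]
  linear_combination root _ * h₂ - conj F n (conj F n (root _)) * h₁

variable [Nontrivial F]

variable (F n) in
noncomputable def basis : Module.Basis (Fin n) F (NegacyclicRing F n) :=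
  (powerBasis' monic_X_pow_add_one).basis.reindex
    (finCongr (by simpa using natDegree_X_pow_add_C (n := n) (r := (1 : F))))

lemma basis_apply (k : Fin n) : basis F n k = root _ ^ (k : ℕ) := by
  simp [basis]

lemma basis_repr_root_pow {m : ℕ} (hm : m < 2 * n) (k : Fin n) :
    (basis F n).repr (root _ ^ m) k = if m = k then 1 else if m = k + n then -1 else 0 := by
  by_cases hmn : m < n
  · rw [← Fin.val_mk hmn, ← basis_apply, Module.Basis.repr_self, Finsupp.single_apply]
    simp only [Fin.ext_iff]
    split_ifs <;> first | rfl | omega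
  · obtain ⟨l, rfl⟩ : ∃ l, m = n + l := ⟨m - n, by omega⟩
    have hl : l < n := by omega
    rw [pow_add, (eq_neg_of_add_eq_zero_left root_pow_add_one : root _ ^ n = -1), neg_one_mul,
      ← Fin.val_mk hl,
      ← basis_apply, map_neg, Module.Basis.repr_self, Finsupp.neg_apply, Finsupp.single_apply]
    simp only [Fin.ext_iff]
    split_ifs <;> first | rfl | omega | simp

local notation "L" => Algebra.leftMulMatrix (basis _ _)

lemma transpose_leftMulMatrix_apply (u : NegacyclicRing F n) (i j : Fin n) :
    (L u)ᵀ i j =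
      if (i : ℕ) ≤ j then (basis F n).repr u (j - i) else -(basis F n).repr u (j - i) := by
  conv_lhs => rw [Matrix.transpose_apply, Algebra.leftMulMatrix_eq_repr_mul,
    ← (basis F n).sum_repr u, Finset.sum_mul, map_sum]
  simp only [Finsupp.coe_finsetSum, Finset.sum_apply, smul_mul_assoc, map_smul,
    Finsupp.smul_apply, basis_apply, ← pow_add, smul_eq_mul]
  have hsub : (i : ℕ) ≤ j ∧ ((j - i : Fin n) : ℕ) + i = j ∨
      (j : ℕ) < i ∧ ((j - i : Fin n) : ℕ) + i = j + n := by
    rcases le_or_gt (i : ℕ) j with hij | hij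
    · exact .inl ⟨hij, by rw [Fin.coe_sub_iff_le.2 hij]; omega⟩
    · exact .inr ⟨hij, by rw [Fin.coe_sub_iff_lt.2 hij]; omega⟩
  rw [Finset.sum_eq_single (j - i)]
  · rw [basis_repr_root_pow (by omega)]
    split_ifs <;> first | omega | simp
  · intro k _ hk
    have : (k : ℕ) ≠ (j - i : Fin n) := fun h => hk (Fin.ext h)
    rw [basis_repr_root_pow (by omega), if_neg (by omega), if_neg (by omega), mul_zero]
  · simp

lemma isNegacirculant_iff_exists_transpose (A : Matrix (Fin n) (Fin n) F) :
    IsNegacirculant A ↔ ∃ u, (L u)ᵀ = A := by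
  constructor
  · rintro ⟨a, hA⟩
    refine ⟨(basis F n).equivFun.symm a, Matrix.ext fun i j => ?_⟩
    rw [hA, transpose_leftMulMatrix_apply, ← Module.Basis.equivFun_apply,
      LinearEquiv.apply_symm_apply]
  · rintro ⟨u, rfl⟩
    exact ⟨(basis F n).repr u, transpose_leftMulMatrix_apply u⟩

lemma transpose_leftMulMatrix_root : (L (root (X ^ n + 1 : F[X])))ᵀ = L (conj F n (root _)) := by
  ext i j
  rw [Matrix.transpose_apply, Algebra.leftMulMatrix_eq_repr_mul,
    Algebra.leftMulMatrix_eq_repr_mul, basis_apply, basis_apply, conj_root, ← pow_succ',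
    neg_mul, ← pow_add, map_neg, Finsupp.neg_apply, basis_repr_root_pow (by omega),
    basis_repr_root_pow (by omega)]
  split_ifs <;> first | omega | simp

lemma transpose_leftMulMatrix (u : NegacyclicRing F n) : (L u)ᵀ = L (conj F n u) := by
  induction u using AdjoinRoot.induction_on with
  | ih p =>
    rw [← aeval_eq, ← aeval_algHom_apply, ← aeval_algHom_apply, ← aeval_algHom_apply,
      Matrix.transpose_aeval, transpose_leftMulMatrix_root]

lemma isNegacirculant_iff_exists (A : Matrix (Fin n) (Fin n) F) :
    IsNegacirculant A ↔ ∃ u, L u = A := by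
  rw [isNegacirculant_iff_exists_transpose]
  constructor
  · rintro ⟨u, rfl⟩
    exact ⟨conj F n u, (transpose_leftMulMatrix u).symm⟩
  · rintro ⟨u, rfl⟩
    exact ⟨conj F n u, by rw [transpose_leftMulMatrix, conj_conj]⟩

lemma leftMulMatrix_mul_transpose_eq_neg_one_iff (u : NegacyclicRing F n) :
    L u * (L u)ᵀ = -1 ↔ u * conj F n u = -1 := by
  rw [transpose_leftMulMatrix, ← map_mul, ← map_one L, ← map_neg,
    (Algebra.leftMulMatrix_injective _).eq_iff]

lemma setOf_isNegacirculant_mul_transpose_eq_neg_one :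
    {A : Matrix (Fin n) (Fin n) F | IsNegacirculant A ∧ A * Aᵀ = -1} =
      L '' {u | u * conj F n u = -1} := by
  ext A
  simp only [Set.mem_ofPred_eq, Set.mem_image, isNegacirculant_iff_exists]
  constructor
  · rintro ⟨⟨u, rfl⟩, hu⟩
    exact ⟨u, (leftMulMatrix_mul_transpose_eq_neg_one_iff u).1 hu, rfl⟩
  · rintro ⟨u, hu, rfl⟩
    exact ⟨⟨u, rfl⟩, (leftMulMatrix_mul_transpose_eq_neg_one_iff u).2 hu⟩

end CommRing

section Field

variable {F : Type*} [Field F] {n : ℕ} {h : F[X]}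

noncomputable def splitEquiv (hcop : IsCoprime h (recip h))
    (hfact : (X ^ n + 1 : F[X]) = h * recip h) :
    NegacyclicRing F n ≃ₐ[F] AdjoinRoot h × AdjoinRoot (recip h) :=
  (algEquivOfEq F _ _ hfact).trans (mulAlgEquivProd hcop)

lemma splitEquiv_root (hcop : IsCoprime h (recip h)) (hfact : (X ^ n + 1 : F[X]) = h * recip h) :
    splitEquiv hcop hfact (root _) = (root h, root (recip h)) := by
  rw [splitEquiv, AlgEquiv.trans_apply, algEquivOfEq_root, mulAlgEquivProd_root]

variable [NeZero n]

lemma coeff_zero_ne_zero_of_eq_mul_recip (hfact : (X ^ n + 1 : F[X]) = h * recip h) :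
    h.coeff 0 ≠ 0 := fun h0 =>
  (monic_X_pow_add_one (R := F) (n := n)).ne_zero (by simp [hfact, recip, h0])

/-- The map induced by `conj` from the first factor of `splitEquiv` to the second one. -/
noncomputable def factorSwap (h0 : h.coeff 0 ≠ 0) (hdvd : recip h ∣ X ^ n + 1) :
    AdjoinRoot h →ₐ[F] AdjoinRoot (recip h) :=
  liftAlgHom h (Algebra.ofId F _) (-root (recip h) ^ (n - 1)) <|
    aeval_eq_zero_of_aeval_recip_eq_zero h0
      (mul_neg_pow_pred_eq_one (NeZero.ne n) (root_pow_add_one_of_dvd hdvd))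
      (by rw [aeval_eq, mk_self])

lemma factorSwap_root (h0 : h.coeff 0 ≠ 0) (hdvd : recip h ∣ X ^ n + 1) :
    factorSwap h0 hdvd (root h) = -root (recip h) ^ (n - 1) :=
  liftAlgHom_root ..

lemma snd_splitEquiv_conj (h0 : h.coeff 0 ≠ 0) (hcop : IsCoprime h (recip h))
    (hfact : (X ^ n + 1 : F[X]) = h * recip h) (u : NegacyclicRing F n) :
    (splitEquiv hcop hfact (conj F n u)).2 =
      factorSwap h0 (Dvd.intro_left h hfact.symm) (splitEquiv hcop hfact u).1 := by
  suffices (AlgHom.snd F _ _).comp ((splitEquiv hcop hfact).toAlgHom.comp (conj F n)) =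
      (factorSwap h0 (Dvd.intro_left h hfact.symm)).comp
        ((AlgHom.fst F _ _).comp (splitEquiv hcop hfact).toAlgHom) from
    congr($this u)
  refine AdjoinRoot.algHom_ext ?_
  simp only [AlgHom.comp_apply, AlgEquiv.coe_toAlgHom, conj_root, map_neg, map_pow,
    splitEquiv_root, AlgHom.snd_apply, AlgHom.fst_apply, factorSwap_root]

noncomputable def selfDualEquivUnits [Fact (Irreducible h)] (hmonic : h.Monic)
    (hne : recip h ≠ h) (hfact : (X ^ n + 1 : F[X]) = h * recip h) :
    {A : Matrix (Fin n) (Fin n) F // IsNegacirculant A ∧ A * Aᵀ = -1} ≃ (AdjoinRoot h)ˣ :=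
  have h0 := coeff_zero_ne_zero_of_eq_mul_recip hfact
  have : Nontrivial (AdjoinRoot (recip h)) := AdjoinRoot.nontrivial _ <| by
    rw [degree_eq_natDegree (monic_recip h0).ne_zero, natDegree_recip h0]
    exact_mod_cast (Fact.out : Irreducible h).natDegree_pos.ne'
  have hcop := isCoprime_recip hmonic Fact.out h0 hne
  (Equiv.setCongr setOf_isNegacirculant_mul_transpose_eq_neg_one).trans <|
    (Equiv.Set.image _ _ (Algebra.leftMulMatrix_injective _)).symm.trans <|
      mulEqNegOneEquivUnits (conj F n).toRingHom (splitEquiv hcop hfact).toRingEquiv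
        (factorSwap h0 (Dvd.intro_left h hfact.symm)).toRingHom conj_conj
        (snd_splitEquiv_conj h0 hcop hfact)

end Field

end NegacyclicRing

theorem card_selfDual_DN_codes_two_factors_general
    {q n : ℕ} (F : Type*) [Field F] [Fintype F]
    (hcard : Fintype.card F = q)
    (h : F[X]) (hmonic : h.Monic) (hirr : Irreducible h)
    (hdeg : h.natDegree = n / 2) (hne : recip h ≠ h)
    (hfact : (X ^ n + 1 : F[X]) = h * recip h) :
    Nat.card {A : Matrix (Fin n) (Fin n) F // IsNegacirculant A ∧ A * A.transpose = -1}
        = q ^ (n / 2) - 1 ∧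
      ∃ A : Matrix (Fin n) (Fin n) F, IsNegacirculant A ∧ A * A.transpose = -1 := by
  have : NeZero n := ⟨by have := hirr.natDegree_pos; omega⟩
  have : Fact (Irreducible h) := ⟨hirr⟩
  let E := NegacyclicRing.selfDualEquivUnits hmonic hne hfact
  refine ⟨?_, (E.symm 1).1, (E.symm 1).2⟩
  rw [Nat.card_congr E, Nat.card_units, AdjoinRoot.natCard_eq_pow_natDegree hmonic,
    Nat.card_eq_fintype_card, hcard, hdeg]

/-- If `n` is a power of `2` and `x^n + 1 = h · h*` over `F_q` with `h` monic irreducible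
of degree `n/2` and `h* ≠ h` its monic reciprocal, then the number of `n × n`
negacirculant matrices `A` over `F_q` with `A Aᵀ = −1` equals `q^(n/2) − 1`; in
particular self-dual double negacirculant codes of length `2n` over `F_q` exist. -/
theorem card_selfDual_DN_codes_two_factors
    {q n : ℕ} (F : Type*) [Field F] [Fintype F]
    (hcard : Fintype.card F = q) (hodd : Odd q) (hn : ∃ k : ℕ, n = 2 ^ k)
    (h : F[X]) (hmonic : h.Monic) (hirr : Irreducible h)
    (hdeg : h.natDegree = n / 2) (hne : recip h ≠ h)
    (hfact : (X ^ n + 1 : F[X]) = h * recip h) :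
    Nat.card {A : Matrix (Fin n) (Fin n) F // IsNegacirculant A ∧ A * A.transpose = -1}
        = q ^ (n / 2) - 1 ∧
      ∃ A : Matrix (Fin n) (Fin n) F, IsNegacirculant A ∧ A * A.transpose = -1 :=
  card_selfDual_DN_codes_two_factors_general F hcard h hmonic hirr hdeg hne hfact
end

section
/- Let q be an odd prime power and n a power of 2 such that x^n + 1 = h'(x)·h''(x) over F_q with h', h'' distinct monic irreducible polynomials of degree n/2, each the reciprocal of the other. Let u ∈ F_q^{2n} be a nonzero vector of Hamming weight < n. Then the number of elements a of R = F_q[x]/(x^n + 1) such that u belongs to the code C_a is at most q^{n/2}. -/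
open Polynomial

/-- The `n × n` negacirculant matrix with first row `a`. -/
def negacirculantMatrix {F : Type*} [Ring F] {n : ℕ} (a : Fin n → F) :
    Matrix (Fin n) (Fin n) F :=
  Matrix.of fun i j => if (i : ℕ) ≤ (j : ℕ) then a (j - i) else - a (j - i)

/-!
Identify `Fin n → F` with the polynomials of degree `< n` (`Polynomial.ofFn`), hence with
`R = F[x]/(x^n + 1)`; then `c ᵥ* negacirculantMatrix a` is the product `c * a` in `R`. If
`u = (c, c * a₀) ∈ C_{a₀}`, then `c ≠ 0` since `u ≠ 0`, and every `a` with `u ∈ C_a` satisfies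
`c * (a - a₀) = 0` in `R`. As `h'` and `h''` are coprime and `deg c < n`, one of them, `p`, does
not divide `c`, so `p ∣ a - a₀`. A multiple of `p` of degree `< n` is determined by its quotient
by `p`, of degree `< n - n/2 = n/2`, which leaves at most `q ^ (n/2)` choices for `a`.
-/

open AdjoinRoot Matrix

section Negacirculant

variable {R : Type*} [CommRing R] {n : ℕ}

lemma negacirculantMatrix_apply_add [NeZero n] (a : Fin n → R) (k l : Fin n) :
    negacirculantMatrix a k (k + l) =
      if (k : ℕ) ≤ ((k + l : Fin n) : ℕ) then a l else -a l := by
  simp [negacirculantMatrix]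

lemma root_X_pow_add_one_pow : root (X ^ n + 1 : R[X]) ^ n = -1 := by
  have h := mk_self (f := (X ^ n + 1 : R[X]))
  rw [map_add, map_pow, mk_X, map_one] at h
  exact eq_neg_of_add_eq_zero_left h

/-- Row `k` of `negacirculantMatrix a` is `x ^ k * a` in `R[x]/(x^n + 1)`: the entries that wrap
around carry the sign of `x ^ n = -1`. -/
lemma algebraMap_negacirculantMatrix_mul_root_pow [NeZero n] (a : Fin n → R) (k l : Fin n) :
    algebraMap R (AdjoinRoot (X ^ n + 1 : R[X])) (negacirculantMatrix a k (k + l)) *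
        root _ ^ ((k + l : Fin n) : ℕ) =
      algebraMap R _ (a l) * root _ ^ ((k : ℕ) + l) := by
  rw [negacirculantMatrix_apply_add, Fin.val_add]
  by_cases h : (k : ℕ) + l < n
  · rw [Nat.mod_eq_of_lt h, if_pos (Nat.le_add_right _ _)]
  · have hl := l.isLt
    rw [Nat.mod_eq_sub_mod (not_lt.1 h), Nat.mod_eq_of_lt (by omega), if_neg (by omega)]
    conv_rhs => rw [show (k : ℕ) + l = (k + l - n) + n by omega, pow_add, root_X_pow_add_one_pow]
    rw [map_neg]
    ring

variable [DecidableEq R]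

lemma mk_ofFn (v : Fin n → R) :
    mk (X ^ n + 1) (ofFn n v) = ∑ i, algebraMap R _ (v i) * root (X ^ n + 1) ^ (i : ℕ) := by
  simp [← aeval_eq, ofFn_eq_sum_monomial, aeval_monomial]

theorem mk_ofFn_vecMul_negacirculantMatrix (c a : Fin n → R) :
    mk (X ^ n + 1) (ofFn n (c ᵥ* negacirculantMatrix a)) =
      mk (X ^ n + 1) (ofFn n c) * mk (X ^ n + 1) (ofFn n a) := by
  rcases n.eq_zero_or_pos with rfl | hn
  · simp
  have : NeZero n := ⟨hn.ne'⟩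
  set θ := root (X ^ n + 1 : R[X])
  rw [mk_ofFn, mk_ofFn, mk_ofFn, Finset.sum_mul_sum]
  calc ∑ j, algebraMap R _ ((c ᵥ* negacirculantMatrix a) j) * θ ^ (j : ℕ)
      = ∑ k, ∑ l, algebraMap R _ (c k) *
          (algebraMap R _ (negacirculantMatrix a k (k + l)) * θ ^ ((k + l : Fin n) : ℕ)) := by
        simp only [vecMul, dotProduct, map_sum, map_mul, Finset.sum_mul]
        rw [Finset.sum_comm]
        refine Finset.sum_congr rfl fun k _ => ?_
        rw [← Equiv.sum_comp (Equiv.addLeft k)]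
        simp only [Equiv.coe_addLeft, mul_assoc]
    _ = _ := by
        refine Finset.sum_congr rfl fun k _ => Finset.sum_congr rfl fun l _ => ?_
        rw [algebraMap_negacirculantMatrix_mul_root_pow, pow_add]
        ring

theorem dvd_ofFn_mul_ofFn_sub_of_vecMul_eq {c a b : Fin n → R}
    (h : c ᵥ* negacirculantMatrix a = c ᵥ* negacirculantMatrix b) :
    X ^ n + 1 ∣ ofFn n c * ofFn n (a - b) := by
  rw [map_sub, mul_sub, ← mk_eq_mk, map_mul, map_mul, ← mk_ofFn_vecMul_negacirculantMatrix,
    ← mk_ofFn_vecMul_negacirculantMatrix, h]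

end Negacirculant

theorem Polynomial.X_pow_add_one_dvd_ofFn_iff {R : Type*} [CommRing R] [IsDomain R]
    [DecidableEq R] {n : ℕ} {c : Fin n → R} : X ^ n + 1 ∣ ofFn n c ↔ c = 0 := by
  refine ⟨fun h => ?_, by rintro rfl; simp⟩
  rcases n.eq_zero_or_pos with rfl | hn
  · exact Subsingleton.elim _ _
  refine injective_ofFn n ((eq_zero_of_dvd_of_degree_lt h ?_).trans (ofFn_zero n).symm)
  rw [← C_1, degree_X_pow_add_C hn]
  exact ofFn_degree_lt c

theorem Polynomial.not_dvd_ofFn_or_not_dvd_ofFn {R : Type*} [CommRing R] [IsDomain R]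
    [DecidableEq R] {n : ℕ} {p q : R[X]} (hpq : IsCoprime p q) (hfact : X ^ n + 1 = p * q)
    {c : Fin n → R} (hc : c ≠ 0) : ¬ p ∣ ofFn n c ∨ ¬ q ∣ ofFn n c := by
  rw [← not_and_or]
  rintro ⟨hp, hq⟩
  exact hc (X_pow_add_one_dvd_ofFn_iff.1 (hfact ▸ hpq.mul_dvd hp hq))

theorem Polynomial.Monic.isCoprime_of_irreducible {K : Type*} [Field K] {p q : K[X]}
    (hp : p.Monic) (hq : q.Monic) (hp' : Irreducible p) (hq' : Irreducible q) (hpq : p ≠ q) :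
    IsCoprime p q :=
  hp'.coprime_iff_not_dvd.2 fun h =>
    hpq (eq_of_monic_of_associated hp hq (hp'.associated_of_dvd hq' h))

lemma Polynomial.Monic.divByMonic_mem_degreeLT_of_dvd {K : Type*} [Field K] {p f : K[X]}
    (hp : p.Monic) (m : ℕ) (hfm : f.degree < m) (hpf : p ∣ f) :
    f /ₘ p ∈ degreeLT K (m - p.natDegree) := by
  obtain ⟨g, rfl⟩ := hpf
  rw [mem_degreeLT, mul_divByMonic_cancel_left _ hp]
  rcases eq_or_ne g 0 with rfl | hg
  · simp
  rw [degree_eq_natDegree (mul_ne_zero hp.ne_zero hg), Nat.cast_lt,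
    Polynomial.natDegree_mul hp.ne_zero hg] at hfm
  rw [degree_eq_natDegree hg, Nat.cast_lt]
  omega

section FiniteField

variable {F : Type*} [Field F] [Fintype F] [DecidableEq F] {n : ℕ}

theorem card_dvd_ofFn_le {p : F[X]} (hp : p.Monic) :
    Nat.card {b : Fin n → F // p ∣ ofFn n b} ≤ Fintype.card F ^ (n - p.natDegree) := by
  let quot (b : {b : Fin n → F // p ∣ ofFn n b}) : Fin (n - p.natDegree) → F :=
    degreeLTEquiv F _ ⟨_, hp.divByMonic_mem_degreeLT_of_dvd n (ofFn_degree_lt b.1) b.2⟩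
  have hinj : Function.Injective quot := by
    rintro ⟨b, g, hg⟩ ⟨b', g', hg'⟩ hbb'
    have hq := congrArg Subtype.val ((degreeLTEquiv F _).injective hbb')
    simp only [hg, hg', mul_divByMonic_cancel_left _ hp] at hq
    exact Subtype.ext (injective_ofFn n (by rw [hg, hg', hq]))
  calc Nat.card {b : Fin n → F // p ∣ ofFn n b}
      ≤ Nat.card (Fin (n - p.natDegree) → F) := Nat.card_le_card_of_injective _ hinj
    _ = _ := by simp [Nat.card_eq_fintype_card]

theorem card_vecMul_negacirculantMatrix_eq_le {p : F[X]} (hp : p.Monic) (hirr : Irreducible p)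
    (hpn : p ∣ X ^ n + 1) {c : Fin n → F} (hc : ¬ p ∣ ofFn n c) (a₀ : Fin n → F) :
    Nat.card {a // c ᵥ* negacirculantMatrix a = c ᵥ* negacirculantMatrix a₀} ≤
      Fintype.card F ^ (n - p.natDegree) := by
  have hdvd (a : {a // c ᵥ* negacirculantMatrix a = c ᵥ* negacirculantMatrix a₀}) :
      p ∣ ofFn n (a.1 - a₀) :=
    (hirr.prime.dvd_or_dvd (hpn.trans (dvd_ofFn_mul_ofFn_sub_of_vecMul_eq a.2))).resolve_left hc
  refine le_trans (Nat.card_le_card_of_injective (fun a => ⟨a.1 - a₀, hdvd a⟩) ?_)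
    (card_dvd_ofFn_le hp)
  intro a b hab
  exact Subtype.ext (sub_left_injective (congrArg Subtype.val hab))

end FiniteField

theorem card_codes_through_low_weight_vector_general
    {q n : ℕ} (F : Type*) [Field F] [Fintype F]
    (hcard : Fintype.card F = q)
    (h' h'' : F[X]) (hne : h' ≠ h'') (hmon' : h'.Monic) (hmon'' : h''.Monic)
    (hirr' : Irreducible h') (hirr'' : Irreducible h'')
    (hdeg' : h'.natDegree = n / 2) (hdeg'' : h''.natDegree = n / 2)
    (hfact : (X ^ n + 1 : F[X]) = h' * h'')
    (u : Fin n ⊕ Fin n → F) (hu : u ≠ 0) :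
    Nat.card {a : Fin n → F //
        ∃ c : Fin n → F, u = Sum.elim c (Matrix.vecMul c (negacirculantMatrix a))}
      ≤ q ^ (n / 2) := by
  classical
  rcases isEmpty_or_nonempty
    {a : Fin n → F // ∃ c : Fin n → F, u = Sum.elim c (c ᵥ* negacirculantMatrix a)}
    with _ | ⟨a₀, c, rfl⟩
  · simp
  have hc : c ≠ 0 := by rintro rfl; exact hu (by simp)
  have hhalf : n - n / 2 = n / 2 := by
    have hdeg := congrArg natDegree hfact
    rw [← C_1, natDegree_X_pow_add_C, natDegree_mul hmon'.ne_zero hmon''.ne_zero, hdeg',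
      hdeg''] at hdeg
    omega
  have hfiber (a : Fin n → F) : (∃ c', Sum.elim c (c ᵥ* negacirculantMatrix a₀) =
      Sum.elim c' (c' ᵥ* negacirculantMatrix a)) →
      c ᵥ* negacirculantMatrix a = c ᵥ* negacirculantMatrix a₀ := fun ⟨_, h⟩ => by
    obtain ⟨rfl, h⟩ := Sum.elim_eq_iff.1 h
    exact h.symm
  calc _ ≤ _ := Nat.card_le_card_of_injective _ (Subtype.impEmbedding _ _ hfiber).injective
    _ ≤ Fintype.card F ^ (n - n / 2) := by
      rcases not_dvd_ofFn_or_not_dvd_ofFn (hmon'.isCoprime_of_irreducible hmon'' hirr' hirr'' hne)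
        hfact hc with h | h
      · simpa only [hdeg'] using card_vecMul_negacirculantMatrix_eq_le hmon' hirr'
          (hfact ▸ dvd_mul_right _ _) h a₀
      · simpa only [hdeg''] using card_vecMul_negacirculantMatrix_eq_le hmon'' hirr''
          (hfact ▸ dvd_mul_left _ _) h a₀
    _ = q ^ (n / 2) := by rw [hcard, hhalf]

/-- Suppose `n` is a power of `2` and `x^n + 1 = h' · h''` over `F_q` with `h', h''`
distinct monic irreducible polynomials of degree `n/2` that are reciprocals of each
other. If `u ∈ F_q^(2n)` is nonzero of Hamming weight `< n`, then the number of
`a ∈ R = F_q[x]/(x^n + 1)` (identified with first rows `a : Fin n → F_q`) such that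
`u` lies in the double negacirculant code `C_a = {(c, c·a) : c ∈ R}` is at most
`q^(n/2)`. -/
theorem card_codes_through_low_weight_vector
    {q n : ℕ} (F : Type*) [Field F] [Fintype F] [DecidableEq F]
    (hcard : Fintype.card F = q) (hodd : Odd q) (hn : ∃ k : ℕ, n = 2 ^ k)
    (h' h'' : F[X]) (hne : h' ≠ h'') (hmon' : h'.Monic) (hmon'' : h''.Monic)
    (hirr' : Irreducible h') (hirr'' : Irreducible h'')
    (hdeg' : h'.natDegree = n / 2) (hdeg'' : h''.natDegree = n / 2)
    (hrec : h'' = recip h')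
    (hfact : (X ^ n + 1 : F[X]) = h' * h'')
    (u : Fin n ⊕ Fin n → F) (hu : u ≠ 0) (hwt : hammingNorm u < n) :
    Nat.card {a : Fin n → F //
        ∃ c : Fin n → F, u = Sum.elim c (Matrix.vecMul c (negacirculantMatrix a))}
      ≤ q ^ (n / 2) :=
  card_codes_through_low_weight_vector_general F hcard h' h'' hne hmon' hmon'' hirr' hirr'' hdeg'
    hdeg'' hfact u hu
end

section
/- Let q be an odd prime power such that for every power of two n, x^n + 1 factors over F_q as a product of two distinct monic irreducible polynomials of degree n/2 that are reciprocals of each other (this holds for q ≡ 3 or 5 (mod 8)). Let δ be a real number with 0 < δ < (q−1)/q and H_q(δ) < 1/4. Then there exists N such that for every power of two n ≥ N there exists a ∈ R = F_q[x]/(x^n + 1) such that every nonzero codeword of the double negacirculant code C_a has Hamming weight greater than 2δn. -/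
open Polynomial

/-- The `q`-ary entropy function
`H_q(x) = x log_q(q−1) − x log_q x − (1−x) log_q(1−x)`. -/
noncomputable def qEntropy (q : ℕ) (x : ℝ) : ℝ :=
  x * Real.logb q (q - 1) - x * Real.logb q x - (1 - x) * Real.logb q (1 - x)

/-!
For `c ≠ 0` one of the two coprime factors `h` of `X ^ n + 1` does not divide `c`, so
`c * a = b` in `F[X] / (X ^ n + 1)` pins `a` down modulo `h`: each fiber of `a ↦ c * a` has
at most `q ^ (n / 2)` elements. If `C_a` has a nonzero codeword `(c, b)` of weight at most
`2 δ n`, then `a` lies in the fiber over `b`, so at most `q ^ (2 n H_q(δ)) * q ^ (n / 2) < q ^ n`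
parameters `a` fail, the last inequality being `H_q(δ) < 1 / 4`.

The Hamming ball bound is the weighting argument: giving `v ∈ F ^ N` the weight
`(δ / (q - 1)) ^ wt(v) * (1 - δ) ^ (N - wt(v))`, the weights sum to `1` and every `v` in the
ball of radius `δ N` weighs at least `q ^ (-N H_q(δ))`.
-/

open Finset

lemma prod_ite_eq_zero_eq_pow_hammingNorm {ι F R : Type*} [Fintype ι] [DecidableEq F]
    [Zero F] [CommMonoid R] (A B : R) (v : ι → F) :
    ∏ i, (if v i = 0 then B else A) =
      A ^ hammingNorm v * B ^ (Fintype.card ι - hammingNorm v) := by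
  rw [prod_ite, prod_const, prod_const, mul_comm]
  congr
  have := card_filter_add_card_filter_not (s := univ) (fun i => v i ≠ 0)
  rw [card_univ] at this
  simp only [not_not] at this
  unfold hammingNorm
  omega

lemma rpow_mul_rpow_sub_le_pow_mul_pow {A B y : ℝ} (hA : 0 < A) (hAB : A ≤ B) {m w : ℕ}
    (hwy : w ≤ y) (hwm : w ≤ m) : A ^ y * B ^ (m - y) ≤ A ^ w * B ^ (m - w) := by
  have hB : 0 < B := hA.trans_le hAB
  have hsplit : ∀ z : ℝ, A ^ z * B ^ ((m : ℝ) - z) = B ^ (m : ℝ) * (A / B) ^ z := fun z => by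
    rw [Real.div_rpow hA.le hB.le, Real.rpow_sub hB]
    field_simp
  rw [← Real.rpow_natCast A, ← Real.rpow_natCast B, Nat.cast_sub hwm, hsplit, hsplit]
  exact mul_le_mul_of_nonneg_left
    (Real.rpow_le_rpow_of_exponent_ge (div_pos hA hB) ((div_le_one hB).2 hAB) hwy) (by positivity)

lemma card_hammingBall_mul_rpow_le_one {ι F : Type*} [Fintype ι] [DecidableEq ι] [Fintype F]
    [DecidableEq F] [Zero F] {A B : ℝ} (hA : 0 < A) (hAB : A ≤ B)
    (hsum : B + (Fintype.card F - 1) * A = 1) {r : ℕ} {y : ℝ} (hry : r ≤ y)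
    (hr : r ≤ Fintype.card ι) :
    #{v : ι → F | hammingNorm v ≤ r} * (A ^ y * B ^ (Fintype.card ι - y)) ≤ 1 := by
  set μ : F → ℝ := fun x => if x = 0 then B else A
  have hμ : ∑ x, μ x = 1 := by
    have hA' : ∀ x ∈ ({0}ᶜ : Finset F), μ x = A := fun x hx => if_neg (by simpa using hx)
    rw [← hsum, Fintype.sum_eq_add_sum_compl 0, sum_congr rfl hA', sum_const, card_compl,
      card_singleton, nsmul_eq_mul, Nat.cast_sub Fintype.card_pos, Nat.cast_one]
    simp [μ]
  have hweight : ∀ v : ι → F, hammingNorm v ≤ r →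
      A ^ y * B ^ (Fintype.card ι - y) ≤ ∏ i, μ (v i) := fun v hv => by
    rw [prod_ite_eq_zero_eq_pow_hammingNorm]
    exact rpow_mul_rpow_sub_le_pow_mul_pow hA hAB (le_trans (by exact_mod_cast hv) hry)
      (hv.trans hr)
  calc _ = ∑ v ∈ {v : ι → F | hammingNorm v ≤ r}, A ^ y * B ^ (Fintype.card ι - y) := by
        rw [sum_const, nsmul_eq_mul]
    _ ≤ ∑ v ∈ {v : ι → F | hammingNorm v ≤ r}, ∏ i, μ (v i) :=
        sum_le_sum fun v hv => hweight v (mem_filter.1 hv).2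
    _ ≤ ∑ v : ι → F, ∏ i, μ (v i) :=
        sum_le_sum_of_subset_of_nonneg (filter_subset _ _) fun v _ _ =>
          prod_nonneg fun i _ => by dsimp [μ]; split_ifs <;> linarith
    _ = 1 := by rw [← Fintype.prod_sum, prod_const, hμ, one_pow]

lemma rpow_neg_mul_qEntropy {q : ℕ} (hq : 1 < q) {δ : ℝ} (hδ0 : 0 < δ) (hδ1 : δ < 1) (x : ℝ) :
    (q : ℝ) ^ (-(x * qEntropy q δ)) = (δ / (q - 1)) ^ (x * δ) * (1 - δ) ^ (x * (1 - δ)) := by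
  have hq' : (1 : ℝ) < q := by exact_mod_cast hq
  rw [Real.rpow_def_of_pos (by linarith), Real.rpow_def_of_pos (by bound),
    Real.rpow_def_of_pos (by linarith), ← Real.exp_add,
    Real.log_div hδ0.ne' (by linarith)]
  have hlog : Real.log q ≠ 0 := (Real.log_pos hq').ne'
  congr 1
  simp only [qEntropy, Real.logb]
  field_simp
  ring

lemma one_lt_of_lt_sub_one_div {q : ℕ} {δ : ℝ} (hδ0 : 0 < δ) (hδ1 : δ < (q - 1 : ℝ) / q) :
    1 < q := by
  by_contra! hq
  interval_cases q <;> norm_num at hδ1 <;> linarith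

lemma card_hammingBall_le_rpow_qEntropy {ι F : Type*} [Fintype ι] [DecidableEq ι] [Fintype F]
    [DecidableEq F] [Zero F] {q : ℕ} (hcard : Fintype.card F = q) {δ : ℝ} (hδ0 : 0 < δ)
    (hδ1 : δ < (q - 1 : ℝ) / q) {r : ℕ} (hr : r ≤ Fintype.card ι * δ) :
    #{v : ι → F | hammingNorm v ≤ r} ≤ (q : ℝ) ^ (Fintype.card ι * qEntropy q δ) := by
  have hq₁ : 1 < q := one_lt_of_lt_sub_one_div hδ0 hδ1
  have hq : (1 : ℝ) < q := by exact_mod_cast hq₁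
  have hδq : q * δ < q - 1 := by rwa [lt_div_iff₀ (by linarith), mul_comm] at hδ1
  have hδ1' : δ < 1 := by nlinarith
  have hAB : δ / (q - 1) ≤ 1 - δ := by rw [div_le_iff₀ (by linarith)]; nlinarith
  have hsum : (1 - δ) + (Fintype.card F - 1) * (δ / (q - 1)) = 1 := by
    rw [hcard]; field_simp [(by linarith : (q : ℝ) - 1 ≠ 0)]; ring
  have hrι : r ≤ Fintype.card ι := by
    exact_mod_cast hr.trans (mul_le_of_le_one_right (Nat.cast_nonneg _) hδ1'.le)
  have hball := card_hammingBall_mul_rpow_le_one (F := F) (div_pos hδ0 (by linarith)) hAB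
    hsum hr hrι
  rwa [← mul_one_sub, ← rpow_neg_mul_qEntropy hq₁ hδ0 hδ1', Real.rpow_neg (by linarith),
    mul_inv_le_iff₀ (by positivity), one_mul] at hball

lemma card_hammingBall_lt_pow {ι F : Type*} [Fintype ι] [DecidableEq ι] [Fintype F]
    [DecidableEq F] [Zero F] {q : ℕ} (hcard : Fintype.card F = q) {δ : ℝ} (hδ0 : 0 < δ)
    (hδ1 : δ < (q - 1 : ℝ) / q) (hH : qEntropy q δ < 1 / 4) {m : ℕ} (hm : 0 < m)
    (hι : Fintype.card ι = 4 * m) {r : ℕ} (hr : r ≤ Fintype.card ι * δ) :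
    #{v : ι → F | hammingNorm v ≤ r} < q ^ m := by
  have hq : (1 : ℝ) < q := by exact_mod_cast one_lt_of_lt_sub_one_div hδ0 hδ1
  have hexp : (Fintype.card ι : ℝ) * qEntropy q δ < m := by
    have := mul_lt_mul_of_pos_left hH ((Nat.cast_pos (α := ℝ)).2 hm)
    rw [hι]
    push_cast
    linarith
  exact_mod_cast (card_hammingBall_le_rpow_qEntropy hcard hδ0 hδ1 hr).trans_lt <|
    (Real.rpow_lt_rpow_left_iff hq).2 hexp |>.trans_eq (Real.rpow_natCast _ _)

section Negacirculant

variable {R : Type*} {n : ℕ}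

lemma negacirculantMatrix_add [Ring R] (a b : Fin n → R) :
    negacirculantMatrix (a + b) = negacirculantMatrix a + negacirculantMatrix b := by
  ext i j
  simp only [negacirculantMatrix, Matrix.of_apply, Matrix.add_apply, Pi.add_apply]
  split_ifs <;> abel

lemma X_pow_add_one_dvd_monomial_sub [CommRing R] (i j : Fin n) (u : R) :
    X ^ n + 1 ∣ monomial ((i : ℕ) + j) u -
      monomial ((i + j : Fin n) : ℕ) (if (i : ℕ) ≤ (i + j : Fin n) then u else -u) := by
  by_cases hij : (i : ℕ) + j < n
  · rw [Fin.val_add_eq_of_add_lt hij, if_pos (Nat.le_add_right _ _), sub_self]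
    exact dvd_zero _
  · obtain ⟨k, hk⟩ := Nat.exists_eq_add_of_le (not_lt.1 hij)
    have hval : ((i + j : Fin n) : ℕ) = k := by rw [Fin.val_add_eq_ite, if_pos (by omega)]; omega
    rw [hval, if_neg (by omega), hk, ← C_mul_X_pow_eq_monomial, ← C_mul_X_pow_eq_monomial]
    exact ⟨C u * X ^ k, by simp only [map_neg]; ring⟩

lemma X_pow_add_one_dvd_ofFn_mul_sub_ofFn_vecMul [CommRing R] [DecidableEq R]
    (c a : Fin n → R) :
    X ^ n + 1 ∣ ofFn n c * ofFn n a - ofFn n (Matrix.vecMul c (negacirculantMatrix a)) := by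
  have hprod : ofFn n c * ofFn n a =
      ∑ i : Fin n, ∑ j : Fin n, monomial ((i : ℕ) + j) (c i * a j) := by
    simp only [ofFn_eq_sum_monomial, sum_mul_sum, monomial_mul_monomial]
  have hvecMul : ofFn n (Matrix.vecMul c (negacirculantMatrix a)) =
      ∑ i : Fin n, ∑ j : Fin n, monomial ((i + j : Fin n) : ℕ)
        (if (i : ℕ) ≤ (i + j : Fin n) then c i * a j else -(c i * a j)) := by
    rw [ofFn_eq_sum_monomial]
    simp only [Matrix.vecMul, dotProduct, map_sum]
    rw [sum_comm]
    refine sum_congr rfl fun i _ => ?_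
    have : NeZero n := ⟨i.pos.ne'⟩
    rw [← Equiv.sum_comp (Equiv.addLeft i)]
    refine sum_congr rfl fun j _ => ?_
    simp [negacirculantMatrix, mul_ite, mul_neg]
  rw [hprod, hvecMul, ← sum_sub_distrib]
  refine dvd_sum fun i _ => ?_
  rw [← sum_sub_distrib]
  exact dvd_sum fun j _ => X_pow_add_one_dvd_monomial_sub i j _

end Negacirculant

lemma AddMonoidHom.card_filter_eq_le_card_filter_eq_zero {G M F : Type*} [AddGroup G]
    [Fintype G] [AddMonoid M] [DecidableEq M] [FunLike F G M] [AddMonoidHomClass F G M]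
    (f : F) (y : M) :
    #{g | f g = y} ≤ #{g | f g = 0} := by
  by_cases hy : y ∈ Set.range f
  · exact (AddMonoidHom.card_fiber_eq_of_mem_range f hy ⟨0, map_zero f⟩).le
  · rw [filter_false_of_mem fun g _ hg => hy ⟨g, hg⟩, card_empty]
    exact Nat.zero_le _

lemma card_le_of_forall_dvd_ofFn {R : Type*} [Ring R] [Fintype R] [DecidableEq R] {h : R[X]}
    (hh : h.Monic) {n : ℕ} {s : Finset (Fin n → R)} (hs : ∀ v ∈ s, h ∣ ofFn n v) :
    #s ≤ Fintype.card R ^ (n - h.natDegree) := by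
  set m := n - h.natDegree
  have hrecover : ∀ v : Fin n → R, h ∣ ofFn n v →
      ofFn n v = h * ofFn m (toFn m (ofFn n v /ₘ h)) := by
    rintro v ⟨Q, hQ⟩
    rcases eq_or_ne Q 0 with rfl | hQ0
    · simp [hQ]
    have hlt : (h * Q).natDegree < n := by
      rw [← hQ, natDegree_lt_iff_degree_lt (hQ ▸ hh.mul_right_ne_zero hQ0)]
      exact ofFn_degree_lt v
    rw [hQ, mul_divByMonic_cancel_left _ hh, ofFn_comp_toFn_eq_id_of_natDegree_lt]
    rw [hh.natDegree_mul' hQ0] at hlt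
    omega
  calc #s ≤ #(univ : Finset (Fin m → R)) :=
        card_le_card_of_injOn (fun v => toFn m (ofFn n v /ₘ h))
          (fun _ _ => mem_coe.2 (mem_univ _))
          fun v hv w hw hvw => injective_ofFn n <| by
            rw [hrecover v (hs v hv), hrecover w (hs w hw)]
            exact congrArg (fun x => h * ofFn m x) hvw
    _ = Fintype.card R ^ m := by rw [card_univ, Fintype.card_fun, Fintype.card_fin]

lemma Polynomial.Monic.isCoprime_of_irreducible_of_ne {F : Type*} [Field F] {h₁ h₂ : F[X]}
    (hm₁ : h₁.Monic) (hm₂ : h₂.Monic) (hi₁ : Irreducible h₁) (hi₂ : Irreducible h₂)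
    (hne : h₁ ≠ h₂) : IsCoprime h₁ h₂ :=
  hi₁.coprime_iff_not_dvd.2 fun hdvd =>
    hne (eq_of_monic_of_associated hm₁ hm₂ (hi₁.associated_of_dvd hi₂ hdvd))

lemma card_filter_vecMul_negacirculantMatrix_eq_le {F : Type*} [Field F] [Fintype F]
    [DecidableEq F] {n d : ℕ} {h₁ h₂ : F[X]} (hfac : X ^ n + 1 = h₁ * h₂)
    (hm₁ : h₁.Monic) (hm₂ : h₂.Monic) (hi₁ : Irreducible h₁) (hi₂ : Irreducible h₂)
    (hcop : IsCoprime h₁ h₂) (hd₁ : d ≤ h₁.natDegree) (hd₂ : d ≤ h₂.natDegree)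
    {c : Fin n → F} (hc : c ≠ 0) (b : Fin n → F) :
    #{a | Matrix.vecMul c (negacirculantMatrix a) = b} ≤ Fintype.card F ^ (n - d) := by
  obtain ⟨i, -⟩ := Function.ne_iff.1 hc
  have hc' : ofFn n c ≠ 0 := by simpa using (injective_ofFn n).ne hc
  have hndvd_c : ¬ (X ^ n + 1 : F[X]) ∣ ofFn n c := by
    refine not_dvd_of_degree_lt hc' ?_
    rw [← C_1, degree_X_pow_add_C i.pos]
    exact ofFn_degree_lt c
  obtain ⟨h, hm, hi, hd, hdvd, hndvd⟩ : ∃ h : F[X], h.Monic ∧ Irreducible h ∧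
      d ≤ h.natDegree ∧ h ∣ X ^ n + 1 ∧ ¬ h ∣ ofFn n c := by
    by_cases hdvd₁ : h₁ ∣ ofFn n c
    · refine ⟨h₂, hm₂, hi₂, hd₂, hfac ▸ dvd_mul_left _ _, fun hdvd₂ => hndvd_c ?_⟩
      exact hfac ▸ hcop.mul_dvd hdvd₁ hdvd₂
    · exact ⟨h₁, hm₁, hi₁, hd₁, hfac ▸ dvd_mul_right _ _, hdvd₁⟩
  let L : (Fin n → F) →+ (Fin n → F) := AddMonoidHom.mk'
    (fun a => Matrix.vecMul c (negacirculantMatrix a))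
    fun a a' => by rw [negacirculantMatrix_add, Matrix.vecMul_add]
  have hker : ∀ a ∈ ({a | L a = 0} : Finset _), h ∣ ofFn n a := fun a ha => by
    have hprod := X_pow_add_one_dvd_ofFn_mul_sub_ofFn_vecMul c a
    rw [show Matrix.vecMul c (negacirculantMatrix a) = 0 from (mem_filter.1 ha).2, map_zero,
      sub_zero] at hprod
    exact (hi.prime.dvd_or_dvd (hdvd.trans hprod)).resolve_left hndvd
  calc #{a | L a = b}
    _ ≤ #{a | L a = 0} := AddMonoidHom.card_filter_eq_le_card_filter_eq_zero L b
    _ ≤ Fintype.card F ^ (n - h.natDegree) := card_le_of_forall_dvd_ofFn hm hker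
    _ ≤ Fintype.card F ^ (n - d) := Nat.pow_le_pow_right Fintype.card_pos (by omega)

lemma exists_forall_lt_hammingNorm_sumElim {ι κ α F : Type*} [Fintype ι] [DecidableEq ι]
    [Fintype κ] [DecidableEq κ] [Fintype α] [Fintype F] [DecidableEq F] [Zero F]
    (f : (ι → F) → α → κ → F) {r K : ℕ} (hfiber : ∀ c ≠ 0, ∀ b, #{a | f c a = b} ≤ K)
    (hcount : #{v : ι ⊕ κ → F | hammingNorm v ≤ r} * K < Fintype.card α) :
    ∃ a, ∀ c ≠ 0, r < hammingNorm (Sum.elim c (f c a)) := by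
  classical
  set bad : Finset α := {a | ∃ c ≠ 0, hammingNorm (Sum.elim c (f c a)) ≤ r}
  have hbad : bad ⊆ ({v | hammingNorm v ≤ r ∧ v ∘ Sum.inl ≠ 0} : Finset (ι ⊕ κ → F)).biUnion
      fun v => {a | f (v ∘ Sum.inl) a = v ∘ Sum.inr} := fun a ha => by
    obtain ⟨c, hc, hw⟩ := (mem_filter.1 ha).2
    exact mem_biUnion.2
      ⟨Sum.elim c (f c a), by simp [hc, hw], mem_filter.2 ⟨mem_univ _, rfl⟩⟩
  have hcard : #bad < #(univ : Finset α) := calc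
    #bad ≤ ∑ v ∈ {v : ι ⊕ κ → F | hammingNorm v ≤ r ∧ v ∘ Sum.inl ≠ 0},
        #{a | f (v ∘ Sum.inl) a = v ∘ Sum.inr} := (card_le_card hbad).trans card_biUnion_le
    _ ≤ #{v : ι ⊕ κ → F | hammingNorm v ≤ r ∧ v ∘ Sum.inl ≠ 0} * K :=
        sum_le_card_nsmul _ _ _ fun v hv => hfiber _ (mem_filter.1 hv).2.2 _
    _ ≤ #{v : ι ⊕ κ → F | hammingNorm v ≤ r} * K :=
        Nat.mul_le_mul_right _ (card_le_card (monotone_filter_right _ fun _ _ => And.left))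
    _ < #(univ : Finset α) := by rwa [card_univ]
  obtain ⟨a, -, ha⟩ := exists_mem_notMem_of_card_lt_card hcard
  exact ⟨a, fun c hc => not_le.1 fun hw => ha (mem_filter.2 ⟨mem_univ _, c, hc, hw⟩)⟩

theorem DN_codes_gilbert_varshamov_general
    {q : ℕ} (F : Type*) [Field F] [Fintype F] [DecidableEq F]
    (hcard : Fintype.card F = q)
    (hfac : ∀ n : ℕ, (∃ k : ℕ, n = 2 ^ k) → 2 ≤ n →
      ∃ h' h'' : F[X], h' ≠ h'' ∧ h'.Monic ∧ h''.Monic ∧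
        Irreducible h' ∧ Irreducible h'' ∧
        h'.natDegree = n / 2 ∧ h''.natDegree = n / 2 ∧ h'' = recip h' ∧
        (X ^ n + 1 : F[X]) = h' * h'')
    (δ : ℝ) (hδ0 : 0 < δ) (hδ1 : δ < (q - 1 : ℝ) / q) (hH : qEntropy q δ < 1 / 4) :
    ∃ N : ℕ, ∀ n : ℕ, (∃ k : ℕ, n = 2 ^ k) → N ≤ n →
      ∃ a : Fin n → F, ∀ c : Fin n → F, c ≠ 0 →
        2 * δ * n <
          (hammingNorm (Sum.elim c (Matrix.vecMul c (negacirculantMatrix a))) : ℝ) := by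
  refine ⟨2, fun n hpow hn => ?_⟩
  obtain ⟨h₁, h₂, hne, hm₁, hm₂, hi₁, hi₂, hd₁, hd₂, -, hfac⟩ := hfac n hpow hn
  have heven : Even n := by
    obtain ⟨k, rfl⟩ := hpow
    exact Nat.even_pow.2 ⟨even_two, by rintro rfl; simp at hn⟩
  obtain ⟨m, rfl⟩ := heven
  have hr : (⌊2 * δ * (m + m : ℕ)⌋₊ : ℝ) ≤
      Fintype.card (Fin (m + m) ⊕ Fin (m + m)) * δ := by
    have := Nat.floor_le (a := 2 * δ * (m + m : ℕ)) (by positivity)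
    rw [Fintype.card_sum, Fintype.card_fin]
    push_cast at this ⊢
    linarith
  have hball := card_hammingBall_lt_pow (F := F) (m := m) hcard hδ0 hδ1 hH (by omega)
    (by simp only [Fintype.card_sum, Fintype.card_fin]; omega) hr
  have hfiber : ∀ c : Fin (m + m) → F, c ≠ 0 → ∀ b,
      #{a | Matrix.vecMul c (negacirculantMatrix a) = b} ≤ q ^ m := fun c hc b => by
    simpa [hcard] using card_filter_vecMul_negacirculantMatrix_eq_le (d := m) hfac hm₁ hm₂
      hi₁ hi₂ (hm₁.isCoprime_of_irreducible_of_ne hm₂ hi₁ hi₂ hne) (by omega) (by omega) hc b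
  obtain ⟨a, ha⟩ := exists_forall_lt_hammingNorm_sumElim _ hfiber <| by
    rw [Fintype.card_fun, Fintype.card_fin, hcard, pow_add]
    exact Nat.mul_lt_mul_of_pos_right hball (pow_pos (hcard ▸ Fintype.card_pos) m)
  exact ⟨a, fun c hc => (Nat.floor_lt (by positivity)).1 (ha c hc)⟩

/-- Modified Gilbert–Varshamov bound for double negacirculant codes. Let `q` be an odd
prime power such that for every power of two `n` (`n ≥ 2`), `x^n + 1` factors over `F_q`
as a product of two distinct monic irreducible reciprocal polynomials of degree `n/2`
(this holds for `q ≡ 3, 5 (mod 8)`). If `0 < δ < (q−1)/q` and `H_q(δ) < 1/4`, then for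
all large enough powers of two `n` there is a double negacirculant code
`C_a = {(c, c·a)}` of length `2n` all of whose nonzero codewords have Hamming weight
greater than `2δn`. -/
theorem DN_codes_gilbert_varshamov
    {q : ℕ} (F : Type*) [Field F] [Fintype F] [DecidableEq F]
    (hcard : Fintype.card F = q) (hodd : Odd q)
    (hfac : ∀ n : ℕ, (∃ k : ℕ, n = 2 ^ k) → 2 ≤ n →
      ∃ h' h'' : F[X], h' ≠ h'' ∧ h'.Monic ∧ h''.Monic ∧
        Irreducible h' ∧ Irreducible h'' ∧
        h'.natDegree = n / 2 ∧ h''.natDegree = n / 2 ∧ h'' = recip h' ∧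
        (X ^ n + 1 : F[X]) = h' * h'')
    (δ : ℝ) (hδ0 : 0 < δ) (hδ1 : δ < (q - 1 : ℝ) / q) (hH : qEntropy q δ < 1 / 4) :
    ∃ N : ℕ, ∀ n : ℕ, (∃ k : ℕ, n = 2 ^ k) → N ≤ n →
      ∃ a : Fin n → F, ∀ c : Fin n → F, c ≠ 0 →
        2 * δ * n <
          (hammingNorm (Sum.elim c (Matrix.vecMul c (negacirculantMatrix a))) : ℝ) :=
  DN_codes_gilbert_varshamov_general F hcard hfac δ hδ0 hδ1 hH
end
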